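/- arXiv:2001.01379 — 11 statements merged into one kernel-verified Lean document; each statement's English description precedes it below -/
import Mathlib

section
/- (Frenet-type equations, Theorem 2.1.) Let e₁, v : ℝ → ℝ³ be smooth curves, and let p₁, p₂, p₃, q₁, q₂ : ℝ → ℝ be continuous functions such that e₁''(s) = p₁(s)·e₁(s) + p₂(s)·e₁'(s) + p₃(s)·v(s) and v'(s) = q₁(s)·e₁(s) + q₂(s)·e₁'(s) for all s. Fix s₀ ∈ ℝ, a constant c₁ > 0 and a constant c₂ ∈ ℝ, and set k(s) = c₁·exp(∫_{s₀}^{s} p₂), f(s) = c₂ − ∫_{s₀}^{s} q₁, e₂(s) = e₁'(s)/k(s), e₃(s) = v(s) + f(s)·e₁(s), k*(s) = (f(s)p₃(s) − p₁(s))/k(s), w(s) = p₃(s)/k(s), and w*(s) = −k(s)(f(s) + q₂(s)). Then for all s: e₁'(s) = k(s)·e₂(s), e₂'(s) = −k*(s)·e₁(s) + w(s)·e₃(s), and e₃'(s) = −w*(s)·e₂(s). -/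
/-!
The scalar `k = c₁ exp (∫ p₂)` is an integrating factor for the `e₁'` term of the first equation:
since `k' = p₂ k`, the derivative of `k⁻¹ e₁'` is `k⁻¹ (p₁ e₁ + p₃ v)`. Likewise `f' = -q₁` is chosen
so that the `e₁` term of `v'` cancels in `(v + f e₁)' = (f + q₂) e₁'`. Rewriting `v = e₃ - f e₁` and
`e₁' = k e₂` then gives the Frenet-type system.
-/

open Real

theorem hasDerivAt_const_mul_exp_integral {p : ℝ → ℝ} (hp : Continuous p) (a c s : ℝ) :
    HasDerivAt (fun u => c * exp (∫ σ in a..u, p σ))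
      (p s * (c * exp (∫ σ in a..s, p σ))) s := by
  refine (((hp.integral_hasStrictDerivAt a s).hasDerivAt.exp).const_mul c).congr_deriv ?_
  ring

section

variable {E : Type*} [NormedAddCommGroup E] [NormedSpace ℝ E]

theorem HasDerivAt.inv_smul_of_hasDerivAt_eq_mul {k p : ℝ → ℝ} {g : ℝ → E} {g' : E} {s : ℝ}
    (hk : HasDerivAt k (p s * k s) s) (hk0 : k s ≠ 0) (hg : HasDerivAt g (p s • g s + g') s) :
    HasDerivAt (fun u => (k u)⁻¹ • g u) ((k s)⁻¹ • g') s := by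
  refine ((hk.inv hk0).smul hg).congr_deriv ?_
  rw [Pi.inv_apply]
  match_scalars <;> field_simp
  ring

theorem HasDerivAt.add_smul_of_cancel {v e : ℝ → E} {f q : ℝ → ℝ} {e' w : E} {s : ℝ}
    (hv : HasDerivAt v (q s • e s + w) s) (hf : HasDerivAt f (-q s) s) (he : HasDerivAt e e' s) :
    HasDerivAt (fun u => v u + f u • e u) (w + f s • e') s := by
  refine (hv.add (hf.smul he)).congr_deriv ?_
  rw [neg_smul]
  abel

end

theorem stmt_2_general (e₁ v : ℝ → (Fin 3 → ℝ)) (p₁ p₂ p₃ q₁ q₂ : ℝ → ℝ)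
    (he₁ : ContDiff ℝ (⊤ : ℕ∞) e₁) (hv : ContDiff ℝ (⊤ : ℕ∞) v)
    (hp₂ : Continuous p₂)
    (hq₁ : Continuous q₁)
    (hODE₁ : ∀ s, deriv (deriv e₁) s
      = p₁ s • e₁ s + p₂ s • deriv e₁ s + p₃ s • v s)
    (hODE₂ : ∀ s, deriv v s = q₁ s • e₁ s + q₂ s • deriv e₁ s)
    (s₀ c₁ c₂ : ℝ) (hc₁ : 0 < c₁)
    (k f : ℝ → ℝ)
    (hk : ∀ s, k s = c₁ * Real.exp (∫ σ in s₀..s, p₂ σ))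
    (hf : ∀ s, f s = c₂ - ∫ σ in s₀..s, q₁ σ)
    (e₂ e₃ : ℝ → (Fin 3 → ℝ))
    (he₂ : ∀ s, e₂ s = (k s)⁻¹ • deriv e₁ s)
    (he₃ : ∀ s, e₃ s = v s + f s • e₁ s)
    (kstar w wstar : ℝ → ℝ)
    (hkstar : ∀ s, kstar s = (f s * p₃ s - p₁ s) / k s)
    (hw : ∀ s, w s = p₃ s / k s)
    (hwstar : ∀ s, wstar s = -(k s * (f s + q₂ s))) :
    (∀ s, deriv e₁ s = k s • e₂ s) ∧
    (∀ s, deriv e₂ s = -kstar s • e₁ s + w s • e₃ s) ∧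
    (∀ s, deriv e₃ s = -wstar s • e₂ s) := by
  have hk0 : ∀ s, k s ≠ 0 := fun s => by rw [hk]; positivity
  have hk' : ∀ s, HasDerivAt k (p₂ s * k s) s := fun s => by
    simpa only [← funext hk, ← hk] using hasDerivAt_const_mul_exp_integral hp₂ s₀ c₁ s
  have hf' : ∀ s, HasDerivAt f (-q₁ s) s := fun s => by
    simpa only [← funext hf] using (hq₁.integral_hasStrictDerivAt s₀ s).hasDerivAt.const_sub c₂
  have he₁' : ∀ s, HasDerivAt e₁ (deriv e₁ s) s :=
    fun s => (he₁.differentiable (by simp) s).hasDerivAt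
  have he₁'' : ∀ s, HasDerivAt (deriv e₁) (p₂ s • deriv e₁ s + (p₁ s • e₁ s + p₃ s • v s)) s :=
    fun s => ((contDiff_infty_iff_deriv.mp he₁).2.differentiable (by simp) s).hasDerivAt.congr_deriv
      (by rw [hODE₁]; abel)
  have hv' : ∀ s, HasDerivAt v (q₁ s • e₁ s + q₂ s • deriv e₁ s) s :=
    fun s => hODE₂ s ▸ (hv.differentiable (by simp) s).hasDerivAt
  obtain rfl : e₂ = _ := funext he₂
  obtain rfl : e₃ = _ := funext he₃
  refine ⟨fun s => by rw [smul_smul, mul_inv_cancel₀ (hk0 s), one_smul], fun s => ?_, fun s => ?_⟩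
  · rw [((hk' s).inv_smul_of_hasDerivAt_eq_mul (hk0 s) (he₁'' s)).deriv, hkstar, hw]
    match_scalars <;> field_simp
    ring
  · rw [((hv' s).add_smul_of_cancel (hf' s) (he₁' s)).deriv, hwstar]
    match_scalars
    field_simp [hk0 s]
    ring

/-- Theorem 2.1: Frenet-type equations.  With
`e₁'' = p₁·e₁ + p₂·e₁' + p₃·v`, `v' = q₁·e₁ + q₂·e₁'`,
`k(s) = c₁·exp(∫_{s₀}^s p₂)`, `f(s) = c₂ − ∫_{s₀}^s q₁`,
`e₂ = e₁'/k`, `e₃ = v + f·e₁`, `k* = (f·p₃ − p₁)/k`, `w = p₃/k`,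
`w* = −k·(f + q₂)`, one has `e₁' = k·e₂`, `e₂' = −k*·e₁ + w·e₃`,
`e₃' = −w*·e₂`. -/
theorem stmt_2 (e₁ v : ℝ → (Fin 3 → ℝ)) (p₁ p₂ p₃ q₁ q₂ : ℝ → ℝ)
    (he₁ : ContDiff ℝ (⊤ : ℕ∞) e₁) (hv : ContDiff ℝ (⊤ : ℕ∞) v)
    (hp₁ : Continuous p₁) (hp₂ : Continuous p₂) (hp₃ : Continuous p₃)
    (hq₁ : Continuous q₁) (hq₂ : Continuous q₂)
    (hODE₁ : ∀ s, deriv (deriv e₁) s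
      = p₁ s • e₁ s + p₂ s • deriv e₁ s + p₃ s • v s)
    (hODE₂ : ∀ s, deriv v s = q₁ s • e₁ s + q₂ s • deriv e₁ s)
    (s₀ c₁ c₂ : ℝ) (hc₁ : 0 < c₁)
    (k f : ℝ → ℝ)
    (hk : ∀ s, k s = c₁ * Real.exp (∫ σ in s₀..s, p₂ σ))
    (hf : ∀ s, f s = c₂ - ∫ σ in s₀..s, q₁ σ)
    (e₂ e₃ : ℝ → (Fin 3 → ℝ))
    (he₂ : ∀ s, e₂ s = (k s)⁻¹ • deriv e₁ s)
    (he₃ : ∀ s, e₃ s = v s + f s • e₁ s)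
    (kstar w wstar : ℝ → ℝ)
    (hkstar : ∀ s, kstar s = (f s * p₃ s - p₁ s) / k s)
    (hw : ∀ s, w s = p₃ s / k s)
    (hwstar : ∀ s, wstar s = -(k s * (f s + q₂ s))) :
    (∀ s, deriv e₁ s = k s • e₂ s) ∧
    (∀ s, deriv e₂ s = -kstar s • e₁ s + w s • e₃ s) ∧
    (∀ s, deriv e₃ s = -wstar s • e₂ s) :=
  stmt_2_general e₁ v p₁ p₂ p₃ q₁ q₂ he₁ hv hp₂ hq₁ hODE₁ hODE₂ s₀ c₁ c₂ hc₁ k f hk hf e₂ e₃ he₂ he₃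
    kstar w wstar hkstar hw hwstar
end

section
/- Let e₁, e₂, e₃ : ℝ → ℝ³ be differentiable curves and k, k*, w, w* : ℝ → ℝ be functions with k(s) > 0 for all s, satisfying the Frenet-type equations e₁' = k·e₂, e₂' = −k*·e₁ + w·e₃, e₃' = −w*·e₂. For constants a > 0 and b ∈ ℝ, define ē₂ = (1/a)·e₂, ē₃ = e₃ + b·e₁, k̄ = a·k, k̄* = (1/a)(k* + b·w), w̄ = (1/a)·w, and w̄* = a(w* − b·k). Then the new frame satisfies the Frenet-type equations e₁' = k̄·ē₂, ē₂' = −k̄*·e₁ + w̄·ē₃, and ē₃' = −w̄*·ē₂. -/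
section FrameChange

variable {E : Type*} [NormedAddCommGroup E] [NormedSpace ℝ E]
  {e₁ e₂ e₃ : ℝ → E} {k kstar w wstar : ℝ → ℝ} {a b s : ℝ}

theorem deriv_eq_smul_rescaled (ha : a ≠ 0) (hF₁ : deriv e₁ s = k s • e₂ s) :
    deriv e₁ s = (a * k s) • ((1 / a) • e₂ s) := by
  rw [hF₁, smul_smul]
  congr 1
  field_simp

theorem deriv_rescaled_of_frenet (hF₂ : deriv e₂ s = -kstar s • e₁ s + w s • e₃ s) :
    deriv (fun t => (1 / a) • e₂ t) s
      = -((1 / a) * (kstar s + b * w s)) • e₁ s + ((1 / a) * w s) • (e₃ s + b • e₁ s) := by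
  rw [deriv_fun_const_smul_field, hF₂]
  match_scalars <;> ring

theorem deriv_sheared_of_frenet (ha : a ≠ 0)
    (hd₁ : DifferentiableAt ℝ e₁ s) (hd₃ : DifferentiableAt ℝ e₃ s)
    (hF₁ : deriv e₁ s = k s • e₂ s) (hF₃ : deriv e₃ s = -wstar s • e₂ s) :
    deriv (fun t => e₃ t + b • e₁ t) s = -(a * (wstar s - b * k s)) • ((1 / a) • e₂ s) := by
  rw [deriv_fun_add hd₃ (hd₁.fun_const_smul b), deriv_fun_const_smul_field, hF₃, hF₁]
  match_scalars
  field_simp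
  ring

end FrameChange

theorem stmt_3_general (e₁ e₂ e₃ : ℝ → (Fin 3 → ℝ)) (k kstar w wstar : ℝ → ℝ)
    (hd₁ : Differentiable ℝ e₁)
    (hd₃ : Differentiable ℝ e₃)
    (hF₁ : ∀ s, deriv e₁ s = k s • e₂ s)
    (hF₂ : ∀ s, deriv e₂ s = -kstar s • e₁ s + w s • e₃ s)
    (hF₃ : ∀ s, deriv e₃ s = -wstar s • e₂ s)
    (a b : ℝ) (ha : 0 < a) :
    (∀ s, deriv e₁ s = (a * k s) • ((1 / a) • e₂ s)) ∧
    (∀ s, deriv (fun t => (1 / a) • e₂ t) s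
      = -((1 / a) * (kstar s + b * w s)) • e₁ s
        + ((1 / a) * w s) • (e₃ s + b • e₁ s)) ∧
    (∀ s, deriv (fun t => e₃ t + b • e₁ t) s
      = -(a * (wstar s - b * k s)) • ((1 / a) • e₂ s)) :=
  ⟨fun s => deriv_eq_smul_rescaled ha.ne' (hF₁ s),
    fun s => deriv_rescaled_of_frenet (hF₂ s),
    fun s => deriv_sheared_of_frenet ha.ne' (hd₁ s) (hd₃ s) (hF₁ s) (hF₃ s)⟩

/-- A frame change `ē₂ = (1/a)·e₂`, `ē₃ = e₃ + b·e₁` (with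
`a > 0`, `b ∈ ℝ`) transforms the Frenet-type coefficients `(k, k*, w, w*)`
into `k̄ = a·k`, `k̄* = (1/a)(k* + b·w)`, `w̄ = (1/a)·w`, `w̄* = a(w* − b·k)`,
and the new frame again satisfies the Frenet-type equations. -/
theorem stmt_3 (e₁ e₂ e₃ : ℝ → (Fin 3 → ℝ)) (k kstar w wstar : ℝ → ℝ)
    (hd₁ : Differentiable ℝ e₁) (hd₂ : Differentiable ℝ e₂)
    (hd₃ : Differentiable ℝ e₃)
    (hkpos : ∀ s, 0 < k s)
    (hF₁ : ∀ s, deriv e₁ s = k s • e₂ s)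
    (hF₂ : ∀ s, deriv e₂ s = -kstar s • e₁ s + w s • e₃ s)
    (hF₃ : ∀ s, deriv e₃ s = -wstar s • e₂ s)
    (a b : ℝ) (ha : 0 < a) :
    (∀ s, deriv e₁ s = (a * k s) • ((1 / a) • e₂ s)) ∧
    (∀ s, deriv (fun t => (1 / a) • e₂ t) s
      = -((1 / a) * (kstar s + b * w s)) • e₁ s
        + ((1 / a) * w s) • (e₃ s + b • e₁ s)) ∧
    (∀ s, deriv (fun t => e₃ t + b • e₁ t) s
      = -(a * (wstar s - b * k s)) • ((1 / a) • e₂ s)) :=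
  stmt_3_general e₁ e₂ e₃ k kstar w wstar hd₁ hd₃ hF₁ hF₂ hF₃ a b ha
end

section
/- (Theorem 2.2.) Let k, k*, w, w* : ℝ → ℝ be differentiable functions with k(s) > 0 for all s. For constants a > 0 and b ∈ ℝ, define k̄ = a·k, k̄* = (1/a)(k* + b·w), w̄ = (1/a)·w, and w̄* = a(w* − b·k). Then for all s: k̄(s)·w̄(s) = k(s)·w(s); k̄'(s)/k̄(s) = k'(s)/k(s); k̄(s)·k̄*(s) + w̄(s)·w̄*(s) = k(s)·k*(s) + w(s)·w*(s); and (w̄*/k̄)'(s) = (w*/k)'(s). In other words, the quantities I₁ = kw, I₂ = k'/k, I₃ = kk* + ww*, and I₄ = (w*/k)' are invariant under the frame change determined by a and b. -/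
/-! `I₂` is the logarithmic derivative of `k`, which ignores constant factors, and `I₄` is
invariant because `w̄*/k̄ = w*/k − b` differs from `w*/k` by a constant; `I₁` and `I₃` are
algebraic identities. -/

theorem frameChange_div_eq {K : Type*} [Field K] {a k : K} (ha : a ≠ 0) (hk : k ≠ 0)
    (b wstar : K) : a * (wstar - b * k) / (a * k) = wstar / k - b := by
  field_simp

theorem stmt_4_general (k kstar w wstar : ℝ → ℝ)
    (hkpos : ∀ s, 0 < k s)
    (a b : ℝ) (ha : 0 < a) :
    (∀ s, (a * k s) * ((1 / a) * w s) = k s * w s) ∧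
    (∀ s, deriv (fun t => a * k t) s / (a * k s) = deriv k s / k s) ∧
    (∀ s, (a * k s) * ((1 / a) * (kstar s + b * w s))
        + ((1 / a) * w s) * (a * (wstar s - b * k s))
      = k s * kstar s + w s * wstar s) ∧
    (∀ s, deriv (fun t => (a * (wstar t - b * k t)) / (a * k t)) s
      = deriv (fun t => wstar t / k t) s) := by
  have ha' : a ≠ 0 := ha.ne'
  refine ⟨fun s => by field_simp, fun s => logDeriv_const_mul s a ha',
    fun s => by field_simp; ring, fun s => ?_⟩
  have hratio : (fun t => a * (wstar t - b * k t) / (a * k t)) = fun t => wstar t / k t - b :=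
    funext fun t => frameChange_div_eq ha' (hkpos t).ne' b (wstar t)
  rw [hratio, deriv_sub_const]

/-- Theorem 2.2: The quantities `I₁ = kw`, `I₂ = k'/k`,
`I₃ = kk* + ww*`, `I₄ = (w*/k)'` are invariant under the frame change
`k̄ = a·k`, `k̄* = (1/a)(k* + b·w)`, `w̄ = (1/a)·w`, `w̄* = a(w* − b·k)`. -/
theorem stmt_4 (k kstar w wstar : ℝ → ℝ)
    (hk : Differentiable ℝ k) (hkstar : Differentiable ℝ kstar)
    (hw : Differentiable ℝ w) (hwstar : Differentiable ℝ wstar)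
    (hkpos : ∀ s, 0 < k s)
    (a b : ℝ) (ha : 0 < a) :
    (∀ s, (a * k s) * ((1 / a) * w s) = k s * w s) ∧
    (∀ s, deriv (fun t => a * k t) s / (a * k s) = deriv k s / k s) ∧
    (∀ s, (a * k s) * ((1 / a) * (kstar s + b * w s))
        + ((1 / a) * w s) * (a * (wstar s - b * k s))
      = k s * kstar s + w s * wstar s) ∧
    (∀ s, deriv (fun t => (a * (wstar t - b * k t)) / (a * k t)) s
      = deriv (fun t => wstar t / k t) s) :=
  stmt_4_general k kstar w wstar hkpos a b ha
end

section
/- (Characterization of cylindrical helices, Theorem 3.1.) Let e₁, e₂, e₃ : ℝ → ℝ³ be differentiable curves that are linearly independent at every s, and let k, k*, w, w* : ℝ → ℝ be continuous with k(s) > 0 for all s, satisfying the Frenet-type equations e₁' = k·e₂, e₂' = −k*·e₁ + w·e₃, e₃' = −w*·e₂. Then there exists a nonzero vector a₀ ∈ ℝ³ such that a₀ lies in the linear span of {e₁(s), e₃(s)} for every s if and only if the function s ↦ w*(s)/k(s) is constant. -/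
/-!
Test a fixed vector `a` against the triple products `A = a ⬝ᵥ e₂ ⨯₃ e₃`, `B = a ⬝ᵥ e₁ ⨯₃ e₂`
and `C = a ⬝ᵥ e₁ ⨯₃ e₃`. The Frenet equations give `A' = -k* C`, `B' = w C` and
`C' = k A - w* B`. If `a` lies in every rectifying plane then `C ≡ 0`, so `A` and `B` are
constants with `k A = w* B`, and `B ≠ 0` because otherwise `a = 0`; hence `w*/k = A/B`.
Conversely, if `w* = c k` then `c e₁ + e₃` has derivative `(c k - w*) e₂ = 0`, so it is a fixed
nonzero vector lying in every rectifying plane.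
-/

open Matrix

theorem eq_of_hasDerivAt_zero {E : Type*} [NormedAddCommGroup E] [NormedSpace ℝ E]
    {f : ℝ → E} (hf : ∀ s, HasDerivAt f 0 s) (s t : ℝ) : f s = f t :=
  is_const_of_deriv_eq_zero (fun s => (hf s).differentiableAt) (fun s => (hf s).deriv) s t

theorem HasDerivAt.crossProduct {u v : ℝ → Fin 3 → ℝ} {u' v' : Fin 3 → ℝ} {s : ℝ}
    (hu : HasDerivAt u u' s) (hv : HasDerivAt v v' s) :
    HasDerivAt (fun t => u t ⨯₃ v t) (u s ⨯₃ v' + u' ⨯₃ v s) s := by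
  let B : (Fin 3 → ℝ) →L[ℝ] (Fin 3 → ℝ) →L[ℝ] Fin 3 → ℝ := LinearMap.toContinuousLinearMap
    (LinearMap.toContinuousLinearMap.toLinearMap ∘ₗ _root_.crossProduct)
  exact B.hasDerivAt_of_bilinear (fun _ => hu) (fun _ => hv)

theorem HasDerivAt.dotProduct {n : Type*} [Fintype n] {u v : ℝ → n → ℝ} {u' v' : n → ℝ}
    {s : ℝ} (hu : HasDerivAt u u' s) (hv : HasDerivAt v v' s) :
    HasDerivAt (fun t => u t ⬝ᵥ v t) (u s ⬝ᵥ v' + u' ⬝ᵥ v s) s := by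
  let B : (n → ℝ) →L[ℝ] (n → ℝ) →L[ℝ] ℝ := LinearMap.toContinuousLinearMap
    (LinearMap.toContinuousLinearMap.toLinearMap ∘ₗ dotProductBilin ℝ ℝ)
  exact B.hasDerivAt_of_bilinear (fun _ => hu) (fun _ => hv)

theorem HasDerivAt.const_dotProduct_cross (a : Fin 3 → ℝ) {u v : ℝ → Fin 3 → ℝ}
    {u' v' : Fin 3 → ℝ} {s : ℝ} (hu : HasDerivAt u u' s) (hv : HasDerivAt v v' s) :
    HasDerivAt (fun t => a ⬝ᵥ u t ⨯₃ v t) (a ⬝ᵥ u' ⨯₃ v s + a ⬝ᵥ u s ⨯₃ v') s := by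
  simpa [dotProduct_add, add_comm] using
    (hasDerivAt_const s a).dotProduct (hu.crossProduct hv)

theorem dotProduct_cross_ne_zero_of_linearIndependent {K : Type*} [Field K]
    {u v w : Fin 3 → K} (h : LinearIndependent K ![u, v, w]) : u ⬝ᵥ v ⨯₃ w ≠ 0 := by
  rw [triple_product_eq_det]
  exact ((Matrix.linearIndependent_rows_iff_isUnit.mp h).map detMonoidHom).ne_zero

theorem dotProduct_cross_eq_zero_of_mem_span_pair {R : Type*} [CommRing R]
    {a u w : Fin 3 → R} (ha : a ∈ Submodule.span R {u, w}) : a ⬝ᵥ u ⨯₃ w = 0 := by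
  obtain ⟨α, β, rfl⟩ := Submodule.mem_span_pair.mp ha
  simp [add_dotProduct, smul_dotProduct, dot_self_cross, dot_cross_self]

theorem eq_zero_of_mem_span_pair_of_dotProduct_cross_eq_zero {K : Type*} [Field K]
    {a u v w : Fin 3 → K} (h : LinearIndependent K ![u, v, w])
    (ha : a ∈ Submodule.span K {u, w}) (hvw : a ⬝ᵥ v ⨯₃ w = 0) (huv : a ⬝ᵥ u ⨯₃ v = 0) :
    a = 0 := by
  obtain ⟨α, β, rfl⟩ := Submodule.mem_span_pair.mp ha
  have hD := dotProduct_cross_ne_zero_of_linearIndependent h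
  simp only [add_dotProduct, smul_dotProduct, smul_eq_mul, dot_cross_self, dot_self_cross,
    mul_zero, add_zero, zero_add] at hvw huv
  rw [triple_product_permutation] at huv
  obtain rfl : α = 0 := (mul_eq_zero.mp hvw).resolve_right hD
  obtain rfl : β = 0 := (mul_eq_zero.mp huv).resolve_right hD
  simp

theorem exists_forall_div_eq_of_forall_mem_span_pair {e₁ e₂ e₃ : ℝ → Fin 3 → ℝ}
    {k kstar w wstar : ℝ → ℝ}
    (hE₁ : ∀ s, HasDerivAt e₁ (k s • e₂ s) s)
    (hE₂ : ∀ s, HasDerivAt e₂ (-kstar s • e₁ s + w s • e₃ s) s)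
    (hE₃ : ∀ s, HasDerivAt e₃ (-wstar s • e₂ s) s)
    (hli : LinearIndependent ℝ ![e₁ 0, e₂ 0, e₃ 0]) (hk : ∀ s, k s ≠ 0)
    {a : Fin 3 → ℝ} (ha : a ≠ 0) (hspan : ∀ s, a ∈ Submodule.span ℝ {e₁ s, e₃ s}) :
    ∃ c, ∀ s, wstar s / k s = c := by
  set A := fun t => a ⬝ᵥ e₂ t ⨯₃ e₃ t
  set B := fun t => a ⬝ᵥ e₁ t ⨯₃ e₂ t
  set C := fun t => a ⬝ᵥ e₁ t ⨯₃ e₃ t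
  have hC : C = 0 := funext fun s => dotProduct_cross_eq_zero_of_mem_span_pair (hspan s)
  have hA' : ∀ s, HasDerivAt A 0 s := fun s => by
    convert (hE₂ s).const_dotProduct_cross a (hE₃ s) using 1
    simp [dotProduct_cross_eq_zero_of_mem_span_pair (hspan s)]
  have hB' : ∀ s, HasDerivAt B 0 s := fun s => by
    convert (hE₁ s).const_dotProduct_cross a (hE₂ s) using 1
    simp [dotProduct_cross_eq_zero_of_mem_span_pair (hspan s)]
  have hC' : ∀ s, HasDerivAt C (k s * A s - wstar s * B s) s := fun s => by
    convert (hE₁ s).const_dotProduct_cross a (hE₃ s) using 1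
    simp [A, B, sub_eq_add_neg]
  have hrel : ∀ s, k s * A 0 = wstar s * B 0 := fun s => by
    rw [← eq_of_hasDerivAt_zero hA' s, ← eq_of_hasDerivAt_zero hB' s, ← sub_eq_zero]
    exact (hC' s).unique (hC ▸ hasDerivAt_const s 0)
  have hB0 : B 0 ≠ 0 := fun hB0 =>
    ha (eq_zero_of_mem_span_pair_of_dotProduct_cross_eq_zero hli (hspan 0)
      (by simpa [hB0, hk 0] using hrel 0) hB0)
  exact ⟨A 0 / B 0, fun s => by rw [div_eq_div_iff (hk s) hB0, ← hrel s, mul_comm]⟩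

theorem exists_ne_zero_forall_mem_span_pair_of_forall_div_eq {e₁ e₂ e₃ : ℝ → Fin 3 → ℝ}
    {k wstar : ℝ → ℝ}
    (hE₁ : ∀ s, HasDerivAt e₁ (k s • e₂ s) s)
    (hE₃ : ∀ s, HasDerivAt e₃ (-wstar s • e₂ s) s)
    (hli : LinearIndependent ℝ ![e₁ 0, e₂ 0, e₃ 0]) (hk : ∀ s, k s ≠ 0)
    {c : ℝ} (hc : ∀ s, wstar s / k s = c) :
    ∃ a : Fin 3 → ℝ, a ≠ 0 ∧ ∀ s, a ∈ Submodule.span ℝ {e₁ s, e₃ s} := by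
  set f := fun s => c • e₁ s + e₃ s
  have hf' : ∀ s, HasDerivAt f 0 s := fun s => by
    refine (((hE₁ s).const_smul c).add (hE₃ s)).congr_deriv ?_
    rw [← hc s, smul_smul, div_mul_cancel₀ _ (hk s), neg_smul, add_neg_cancel]
  refine ⟨f 0, fun h0 => ?_, fun s => ?_⟩
  · simpa using Fintype.linearIndependent_iff.mp hli ![c, 0, 1]
      (by simpa [Fin.sum_univ_three, f] using h0) 2
  · rw [← eq_of_hasDerivAt_zero hf' s 0]
    exact Submodule.mem_span_pair.mpr ⟨c, 1, by simp [f]⟩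

theorem stmt_7_general (e₁ e₂ e₃ : ℝ → (Fin 3 → ℝ)) (k kstar w wstar : ℝ → ℝ)
    (hd₁ : Differentiable ℝ e₁) (hd₂ : Differentiable ℝ e₂)
    (hd₃ : Differentiable ℝ e₃)
    (hli : ∀ s, LinearIndependent ℝ ![e₁ s, e₂ s, e₃ s])
    (hkpos : ∀ s, 0 < k s)
    (hF₁ : ∀ s, deriv e₁ s = k s • e₂ s)
    (hF₂ : ∀ s, deriv e₂ s = -kstar s • e₁ s + w s • e₃ s)
    (hF₃ : ∀ s, deriv e₃ s = -wstar s • e₂ s) :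
    (∃ a₀ : Fin 3 → ℝ, a₀ ≠ 0 ∧
      ∀ s, a₀ ∈ Submodule.span ℝ {e₁ s, e₃ s}) ↔
    (∃ c : ℝ, ∀ s, wstar s / k s = c) := by
  have hE₁ : ∀ s, HasDerivAt e₁ (k s • e₂ s) s := fun s => hF₁ s ▸ (hd₁ s).hasDerivAt
  have hE₂ : ∀ s, HasDerivAt e₂ (-kstar s • e₁ s + w s • e₃ s) s :=
    fun s => hF₂ s ▸ (hd₂ s).hasDerivAt
  have hE₃ : ∀ s, HasDerivAt e₃ (-wstar s • e₂ s) s := fun s => hF₃ s ▸ (hd₃ s).hasDerivAt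
  have hk : ∀ s, k s ≠ 0 := fun s => (hkpos s).ne'
  constructor
  · rintro ⟨a₀, ha₀, hspan⟩
    exact exists_forall_div_eq_of_forall_mem_span_pair hE₁ hE₂ hE₃ (hli 0) hk ha₀ hspan
  · rintro ⟨c, hc⟩
    exact exists_ne_zero_forall_mem_span_pair_of_forall_div_eq hE₁ hE₃ (hli 0) hk hc

/-- Theorem 3.1, cylindrical helices: For a Frenet-type frame
`(e₁, e₂, e₃)` with coefficients `(k, k*, w, w*)`, `k > 0`, there is a fixed
nonzero direction `a₀` lying in every rectifying plane `span{e₁(s), e₃(s)}`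
iff `w*/k` is constant. -/
theorem stmt_7 (e₁ e₂ e₃ : ℝ → (Fin 3 → ℝ)) (k kstar w wstar : ℝ → ℝ)
    (hd₁ : Differentiable ℝ e₁) (hd₂ : Differentiable ℝ e₂)
    (hd₃ : Differentiable ℝ e₃)
    (hli : ∀ s, LinearIndependent ℝ ![e₁ s, e₂ s, e₃ s])
    (hk : Continuous k) (hkstar : Continuous kstar)
    (hw : Continuous w) (hwstar : Continuous wstar)
    (hkpos : ∀ s, 0 < k s)
    (hF₁ : ∀ s, deriv e₁ s = k s • e₂ s)
    (hF₂ : ∀ s, deriv e₂ s = -kstar s • e₁ s + w s • e₃ s)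
    (hF₃ : ∀ s, deriv e₃ s = -wstar s • e₂ s) :
    (∃ a₀ : Fin 3 → ℝ, a₀ ≠ 0 ∧
      ∀ s, a₀ ∈ Submodule.span ℝ {e₁ s, e₃ s}) ↔
    (∃ c : ℝ, ∀ s, wstar s / k s = c) :=
  stmt_7_general e₁ e₂ e₃ k kstar w wstar hd₁ hd₂ hd₃ hli hkpos hF₁ hF₂ hF₃
end

section
/- (Characterization of rectifying curves, Theorem 3.2.) Let γ : ℝ → ℝ³ be a differentiable curve and e₁, e₂, e₃ : ℝ → ℝ³ differentiable curves that are linearly independent at every s, with γ'(s) = e₁(s) for all s. Let k, k*, w, w* : ℝ → ℝ be continuous with k(s) > 0 for all s, satisfying the Frenet-type equations e₁' = k·e₂, e₂' = −k*·e₁ + w·e₃, e₃' = −w*·e₂. Then there exists a fixed point p₀ ∈ ℝ³ such that p₀ − γ(s) lies in the linear span of {e₁(s), e₃(s)} for every s if and only if there exist constants c ∈ ℝ and β ≠ 0 such that w*(s)/k(s) = (c − s)/β for all s (equivalently, (w*/k)' is a nonzero constant). -/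
/-!
If `p₀ - γ = a • e₁ + b • e₃`, the coefficients are differentiable by Cramer's rule, and
differentiating with `γ' = e₁` and the Frenet equations for `e₁` and `e₃` gives, by linear
independence of the frame, `a' = -1`, `b' = 0` and `a k = b w*`. Hence `a = c - s`, `b = β` is
constant, and `β ≠ 0` since otherwise `a ≡ 0`; so `w*/k = (c - s)/β`. Conversely, if
`β w* = (c - s) k`, then `γ + (c - s) • e₁ + β • e₃` has derivative zero, and this constant
point lies on every rectifying plane.
-/

open Matrix Submodule

section Determinant

variable {R : Type*} [CommRing R]

theorem det_of_smul_add_smul_row_zero (a b : R) (u v w : Fin 3 → R) :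
    (of ![a • u + b • w, v, w]).det = a * (of ![u, v, w]).det := by
  simp only [det_fin_three, of_apply, cons_val_zero, cons_val_one, cons_val_two, head_cons,
    tail_cons, Pi.add_apply, Pi.smul_apply, smul_eq_mul]
  ring

theorem det_of_smul_add_smul_row_two (a b : R) (u v w : Fin 3 → R) :
    (of ![u, v, a • u + b • w]).det = b * (of ![u, v, w]).det := by
  simp only [det_fin_three, of_apply, cons_val_zero, cons_val_one, cons_val_two, head_cons,
    tail_cons, Pi.add_apply, Pi.smul_apply, smul_eq_mul]
  ring

end Determinant

theorem LinearIndependent.eq_zero_of_smul_add_smul_add_smul {R M : Type*} [Ring R]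
    [AddCommGroup M] [Module R M] {x y z : M} (h : LinearIndependent R ![x, y, z]) {a b c : R}
    (habc : a • x + b • y + c • z = 0) : a = 0 ∧ b = 0 ∧ c = 0 := by
  have := Fintype.linearIndependent_iff.1 h ![a, b, c] (by simpa [Fin.sum_univ_three] using habc)
  exact ⟨this 0, this 1, this 2⟩

section Coefficients

variable {𝕜 : Type*} [NontriviallyNormedField 𝕜] {E : Type*} [NormedAddCommGroup E]
  [NormedSpace 𝕜 E]

theorem Differentiable.det_of_fin_three {f g h : E → Fin 3 → 𝕜} (hf : Differentiable 𝕜 f)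
    (hg : Differentiable 𝕜 g) (hh : Differentiable 𝕜 h) :
    Differentiable 𝕜 fun x => (of ![f x, g x, h x]).det := by
  have := differentiable_pi.1 hf
  have := differentiable_pi.1 hg
  have := differentiable_pi.1 hh
  simp only [det_fin_three, of_apply, cons_val_zero, cons_val_one, cons_val_two, head_cons,
    tail_cons]
  fun_prop

theorem exists_differentiable_coeffs_of_mem_span_pair {e₁ e₂ e₃ v : 𝕜 → Fin 3 → 𝕜}
    (hli : ∀ x, LinearIndependent 𝕜 ![e₁ x, e₂ x, e₃ x]) (hd₁ : Differentiable 𝕜 e₁)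
    (hd₂ : Differentiable 𝕜 e₂) (hd₃ : Differentiable 𝕜 e₃) (hdv : Differentiable 𝕜 v)
    (hmem : ∀ x, v x ∈ span 𝕜 {e₁ x, e₃ x}) :
    ∃ a b : 𝕜 → 𝕜, Differentiable 𝕜 a ∧ Differentiable 𝕜 b ∧
      ∀ x, v x = a x • e₁ x + b x • e₃ x := by
  set D := fun x => (of ![e₁ x, e₂ x, e₃ x]).det
  have hD : ∀ x, D x ≠ 0 := fun x =>
    ((isUnit_iff_isUnit_det _).1 (linearIndependent_rows_iff_isUnit.1 (hli x))).ne_zero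
  have hdD : Differentiable 𝕜 D := hd₁.det_of_fin_three hd₂ hd₃
  refine ⟨fun x => (of ![v x, e₂ x, e₃ x]).det / D x, fun x => (of ![e₁ x, e₂ x, v x]).det / D x,
    (hdv.det_of_fin_three hd₂ hd₃).div hdD hD, (hd₁.det_of_fin_three hd₂ hdv).div hdD hD,
    fun x => ?_⟩
  obtain ⟨a, b, hab⟩ := mem_span_pair.1 (hmem x)
  simp only [← hab, det_of_smul_add_smul_row_zero, det_of_smul_add_smul_row_two,
    mul_div_cancel_right₀ _ (hD x), D]

end Coefficients

section Frame

variable {F : Type*} [NormedAddCommGroup F] [NormedSpace ℝ F]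

def IsRectifying (γ e₁ e₃ : ℝ → F) : Prop :=
  ∃ p₀ : F, ∀ s, p₀ - γ s ∈ span ℝ {e₁ s, e₃ s}

variable {γ e₁ e₂ e₃ : ℝ → F} {k wstar : ℝ → ℝ}

theorem coeff_relations_of_sub_eq_smul_add_smul {a b : ℝ → ℝ} {p₀ : F}
    (hli : ∀ s, LinearIndependent ℝ ![e₁ s, e₂ s, e₃ s]) (hd₁ : Differentiable ℝ e₁)
    (hd₃ : Differentiable ℝ e₃) (hda : Differentiable ℝ a) (hdb : Differentiable ℝ b)
    (hγ' : ∀ s, deriv γ s = e₁ s) (hF₁ : ∀ s, deriv e₁ s = k s • e₂ s)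
    (hF₃ : ∀ s, deriv e₃ s = -wstar s • e₂ s)
    (hrep : ∀ s, p₀ - γ s = a s • e₁ s + b s • e₃ s) (s : ℝ) :
    deriv a s = -1 ∧ a s * k s = b s * wstar s ∧ deriv b s = 0 := by
  have hderiv : -e₁ s = (a s • (k s • e₂ s) + deriv a s • e₁ s)
      + (b s • (-wstar s • e₂ s) + deriv b s • e₃ s) := calc
    -e₁ s = deriv (fun t => p₀ - γ t) s := by rw [deriv_const_sub, hγ']
    _ = deriv (fun t => a t • e₁ t + b t • e₃ t) s := by rw [funext hrep]
    _ = _ := by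
      rw [deriv_fun_add (f := fun t => a t • e₁ t) (g := fun t => b t • e₃ t)
          ((hda s).smul (hd₁ s)) ((hdb s).smul (hd₃ s)),
        deriv_fun_smul (hda s) (hd₁ s), deriv_fun_smul (hdb s) (hd₃ s), hF₁, hF₃]
  obtain ⟨h₁, h₂, h₃⟩ := (hli s).eq_zero_of_smul_add_smul_add_smul
    (a := deriv a s + 1) (b := a s * k s - b s * wstar s) (c := deriv b s)
    (by linear_combination (norm := module) -hderiv)
  exact ⟨by linarith, by linarith, h₃⟩

theorem isRectifying_of_ratio (hdγ : Differentiable ℝ γ) (hd₁ : Differentiable ℝ e₁)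
    (hd₃ : Differentiable ℝ e₃) (hγ' : ∀ s, deriv γ s = e₁ s)
    (hF₁ : ∀ s, deriv e₁ s = k s • e₂ s) (hF₃ : ∀ s, deriv e₃ s = -wstar s • e₂ s)
    (hk : ∀ s, k s ≠ 0) {c β : ℝ} (hβ : β ≠ 0) (hr : ∀ s, wstar s / k s = (c - s) / β) :
    IsRectifying γ e₁ e₃ := by
  have hw : ∀ s, β * wstar s = (c - s) * k s := fun s => by
    have := hr s
    rw [div_eq_div_iff (hk s) hβ] at this
    linarith
  set p := fun s => γ s + (c - s) • e₁ s + β • e₃ s with hp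
  have hdc : Differentiable ℝ fun s : ℝ => c - s := by fun_prop
  have hdp : Differentiable ℝ p := (hdγ.add (hdc.smul hd₁)).add (hd₃.const_smul β)
  have hp' : ∀ s, deriv p s = 0 := fun s => by
    rw [hp, deriv_fun_add (f := fun t => γ t + (c - t) • e₁ t) (g := fun t => β • e₃ t)
      ((hdγ s).add ((hdc s).smul (hd₁ s))) ((hd₃ s).const_smul β),
      deriv_fun_add (f := γ) (g := fun t => (c - t) • e₁ t) (hdγ s) ((hdc s).smul (hd₁ s)),
      deriv_fun_smul (hdc s) (hd₁ s),
      deriv_fun_const_smul β (hd₃ s), deriv_const_sub_id, hγ' s, hF₁ s, hF₃ s]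
    linear_combination (norm := module) (hw s).symm • e₂ s
  refine ⟨p 0, fun s => mem_span_pair.2 ⟨c - s, β, ?_⟩⟩
  rw [is_const_of_deriv_eq_zero hdp hp' 0 s, hp]
  module

end Frame

theorem exists_ratio_of_isRectifying {γ e₁ e₂ e₃ : ℝ → Fin 3 → ℝ} {k wstar : ℝ → ℝ}
    (hdγ : Differentiable ℝ γ) (hd₁ : Differentiable ℝ e₁) (hd₂ : Differentiable ℝ e₂)
    (hd₃ : Differentiable ℝ e₃) (hli : ∀ s, LinearIndependent ℝ ![e₁ s, e₂ s, e₃ s])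
    (hγ' : ∀ s, deriv γ s = e₁ s) (hk : ∀ s, k s ≠ 0) (hF₁ : ∀ s, deriv e₁ s = k s • e₂ s)
    (hF₃ : ∀ s, deriv e₃ s = -wstar s • e₂ s) (hγ : IsRectifying γ e₁ e₃) :
    ∃ c β : ℝ, β ≠ 0 ∧ ∀ s, wstar s / k s = (c - s) / β := by
  obtain ⟨p₀, hp₀⟩ := hγ
  obtain ⟨a, b, hda, hdb, hrep⟩ := exists_differentiable_coeffs_of_mem_span_pair hli hd₁ hd₂ hd₃
    ((differentiable_const p₀).sub hdγ) hp₀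
  have hab := coeff_relations_of_sub_eq_smul_add_smul hli hd₁ hd₃ hda hdb hγ' hF₁ hF₃ hrep
  have hb : ∀ s, b s = b 0 := fun s => is_const_of_deriv_eq_zero hdb (fun t => (hab t).2.2) s 0
  have ha : ∀ s, a s = a 0 - s := fun s => by
    have := is_const_of_deriv_eq_zero (f := fun t => a t + t) (hda.add differentiable_fun_id)
      (fun t => by rw [deriv_fun_add (hda t) differentiableAt_fun_id, (hab t).1, deriv_id'']; ring)
      s 0
    linarith
  have hβ : b 0 ≠ 0 := fun hβ => by
    have ha₀ : a = 0 := funext fun s => by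
      simpa [hb s, hβ, hk s] using (hab s).2.1
    simpa [ha₀] using (hab 0).1
  refine ⟨a 0, b 0, hβ, fun s => ?_⟩
  rw [div_eq_div_iff (hk s) hβ, ← ha s, ← hb s]
  linarith [(hab s).2.1]

theorem stmt_8_general (γ e₁ e₂ e₃ : ℝ → (Fin 3 → ℝ)) (k wstar : ℝ → ℝ)
    (hdγ : Differentiable ℝ γ)
    (hd₁ : Differentiable ℝ e₁) (hd₂ : Differentiable ℝ e₂)
    (hd₃ : Differentiable ℝ e₃)
    (hli : ∀ s, LinearIndependent ℝ ![e₁ s, e₂ s, e₃ s])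
    (hγ' : ∀ s, deriv γ s = e₁ s)
    (hkpos : ∀ s, 0 < k s)
    (hF₁ : ∀ s, deriv e₁ s = k s • e₂ s)
    (hF₃ : ∀ s, deriv e₃ s = -wstar s • e₂ s) :
    (∃ p₀ : Fin 3 → ℝ,
      ∀ s, p₀ - γ s ∈ Submodule.span ℝ {e₁ s, e₃ s}) ↔
    (∃ c β : ℝ, β ≠ 0 ∧ ∀ s, wstar s / k s = (c - s) / β) := by
  have hk : ∀ s, k s ≠ 0 := fun s => (hkpos s).ne'
  exact ⟨exists_ratio_of_isRectifying hdγ hd₁ hd₂ hd₃ hli hγ' hk hF₁ hF₃,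
    fun ⟨_, _, hβ, hr⟩ => isRectifying_of_ratio hdγ hd₁ hd₃ hγ' hF₁ hF₃ hk hβ hr⟩

/-- Theorem 3.2, rectifying curves: A curve `γ` with Frenet-type
frame `(e₁, e₂, e₃)`, `γ' = e₁`, coefficients `(k, k*, w, w*)`, `k > 0`, is a
rectifying curve (there is a fixed point `p₀` with `p₀ − γ(s)` in every
rectifying plane `span{e₁(s), e₃(s)}`) iff there are constants `c` and
`β ≠ 0` with `w*/k = (c − s)/β`, i.e. `(w*/k)'` is a nonzero constant. -/
theorem stmt_8 (γ e₁ e₂ e₃ : ℝ → (Fin 3 → ℝ)) (k kstar w wstar : ℝ → ℝ)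
    (hdγ : Differentiable ℝ γ)
    (hd₁ : Differentiable ℝ e₁) (hd₂ : Differentiable ℝ e₂)
    (hd₃ : Differentiable ℝ e₃)
    (hli : ∀ s, LinearIndependent ℝ ![e₁ s, e₂ s, e₃ s])
    (hγ' : ∀ s, deriv γ s = e₁ s)
    (hk : Continuous k) (hkstar : Continuous kstar)
    (hw : Continuous w) (hwstar : Continuous wstar)
    (hkpos : ∀ s, 0 < k s)
    (hF₁ : ∀ s, deriv e₁ s = k s • e₂ s)
    (hF₂ : ∀ s, deriv e₂ s = -kstar s • e₁ s + w s • e₃ s)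
    (hF₃ : ∀ s, deriv e₃ s = -wstar s • e₂ s) :
    (∃ p₀ : Fin 3 → ℝ,
      ∀ s, p₀ - γ s ∈ Submodule.span ℝ {e₁ s, e₃ s}) ↔
    (∃ c β : ℝ, β ≠ 0 ∧ ∀ s, wstar s / k s = (c - s) / β) :=
  stmt_8_general γ e₁ e₂ e₃ k wstar hdγ hd₁ hd₂ hd₃ hli hγ' hkpos hF₁ hF₃
end

section
/- (Behavior of the coefficients under the speed change of Example 2.) Let a, v : ℝ → ℝ³ be smooth curves and P₁, P₂, P₃, Q₁, Q₂ : ℝ → ℝ smooth functions with a''' = P₁·a' + P₂·a'' + P₃·v and v' = Q₁·a' + Q₂·a''. Let f : ℝ → ℝ be smooth and positive, and let ψ : ℝ → ℝ be a smooth map with ψ'(σ) = 1/f(ψ(σ)) for all σ (the inverse of the reparametrization with speed f). Define E₁ = a' ∘ ψ and V = v ∘ ψ. Then for all σ: E₁''(σ) = (P₁/f²)(ψ(σ))·E₁(σ) + (P₂/f − f'/f²)(ψ(σ))·E₁'(σ) + (P₃/f²)(ψ(σ))·V(σ), and V'(σ) = (Q₁/f)(ψ(σ))·E₁(σ) + Q₂(ψ(σ))·E₁'(σ).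 Consequently, the invariants of the reparametrized curve satisfy I₁ = P₃/f², I₂ = P₂/f − f'/f², I₃ = −(P₁ + P₃Q₂)/f², and I₄ = (Q₁ − Q₂')/f (each evaluated along ψ). -/
/-!
If `ψ' = 1 / (f ∘ ψ)`, the chain rule gives `(g ∘ ψ)' = (g' ∘ ψ) / (f ∘ ψ)` for every curve `g`,
and differentiating once more, `(g ∘ ψ)'' = (g'' ∘ ψ) / (f ∘ ψ)² - (f' / f² ∘ ψ) · (g ∘ ψ)'`.
Substituting the structure equations for `a'''` and `v'` into these formulas for `g = a'` and
`g = v` yields the new coefficients; the invariants are then rational identities in them.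
-/

section Reparametrization

variable {E : Type*} [NormedAddCommGroup E] [NormedSpace ℝ E] {f ψ : ℝ → ℝ} {g : ℝ → E} {σ : ℝ}

theorem hasDerivAt_comp_of_hasDerivAt_inv (hψ : HasDerivAt ψ (f (ψ σ))⁻¹ σ)
    (hg : DifferentiableAt ℝ g (ψ σ)) :
    HasDerivAt (fun τ => g (ψ τ)) ((f (ψ σ))⁻¹ • deriv g (ψ σ)) σ :=
  hg.hasDerivAt.scomp σ hψ

theorem deriv_comp_of_hasDerivAt_inv (hψ : HasDerivAt ψ (f (ψ σ))⁻¹ σ)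
    (hg : DifferentiableAt ℝ g (ψ σ)) :
    deriv (fun τ => g (ψ τ)) σ = (f (ψ σ))⁻¹ • deriv g (ψ σ) :=
  (hasDerivAt_comp_of_hasDerivAt_inv hψ hg).deriv

theorem deriv_deriv_comp_of_hasDerivAt_inv (hψ : ∀ τ, HasDerivAt ψ (f (ψ τ))⁻¹ τ)
    (hf : DifferentiableAt ℝ f (ψ σ)) (hf₀ : f (ψ σ) ≠ 0)
    (hg : Differentiable ℝ g) (hg' : DifferentiableAt ℝ (deriv g) (ψ σ)) :
    deriv (deriv fun τ => g (ψ τ)) σ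
      = (f (ψ σ) ^ 2)⁻¹ • deriv (deriv g) (ψ σ)
        - (deriv f (ψ σ) / f (ψ σ) ^ 2) • deriv (fun τ => g (ψ τ)) σ := by
  have hderiv : deriv (fun τ => g (ψ τ)) = fun τ => (f (ψ τ))⁻¹ • deriv g (ψ τ) :=
    funext fun τ => deriv_comp_of_hasDerivAt_inv (hψ τ) (hg _)
  have hfψ : HasDerivAt (fun τ => f (ψ τ)) ((f (ψ σ))⁻¹ • deriv f (ψ σ)) σ :=
    hasDerivAt_comp_of_hasDerivAt_inv (hψ σ) hf
  have hsecond : HasDerivAt (fun τ => (f (ψ τ))⁻¹ • deriv g (ψ τ))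
      ((f (ψ σ))⁻¹ • (f (ψ σ))⁻¹ • deriv (deriv g) (ψ σ)
        + (-((f (ψ σ))⁻¹ • deriv f (ψ σ)) / f (ψ σ) ^ 2) • deriv g (ψ σ)) σ :=
    (hfψ.inv hf₀).smul (hasDerivAt_comp_of_hasDerivAt_inv (hψ σ) hg')
  rw [hderiv, hsecond.deriv]
  module

end Reparametrization

theorem stmt_9_general (a v : ℝ → (Fin 3 → ℝ)) (P₁ P₂ P₃ Q₁ Q₂ : ℝ → ℝ)
    (ha : ContDiff ℝ (⊤ : ℕ∞) a) (hv : ContDiff ℝ (⊤ : ℕ∞) v)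
    (hQ₂ : ContDiff ℝ (⊤ : ℕ∞) Q₂)
    (hODE₁ : ∀ s, deriv (deriv (deriv a)) s
      = P₁ s • deriv a s + P₂ s • deriv (deriv a) s + P₃ s • v s)
    (hODE₂ : ∀ s, deriv v s = Q₁ s • deriv a s + Q₂ s • deriv (deriv a) s)
    (f : ℝ → ℝ) (hf : ContDiff ℝ (⊤ : ℕ∞) f) (hfpos : ∀ s, 0 < f s)
    (ψ : ℝ → ℝ) (hψ : ContDiff ℝ (⊤ : ℕ∞) ψ)
    (hψ' : ∀ σ, deriv ψ σ = 1 / f (ψ σ))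
    (E₁ V : ℝ → (Fin 3 → ℝ))
    (hE₁ : ∀ σ, E₁ σ = deriv a (ψ σ)) (hV : ∀ σ, V σ = v (ψ σ)) :
    (∀ σ, deriv (deriv E₁) σ
      = (P₁ (ψ σ) / (f (ψ σ)) ^ 2) • E₁ σ
        + (P₂ (ψ σ) / f (ψ σ) - deriv f (ψ σ) / (f (ψ σ)) ^ 2) • deriv E₁ σ
        + (P₃ (ψ σ) / (f (ψ σ)) ^ 2) • V σ) ∧
    (∀ σ, deriv V σ
      = (Q₁ (ψ σ) / f (ψ σ)) • E₁ σ + Q₂ (ψ σ) • deriv E₁ σ) ∧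
    (∀ σ, -(P₁ (ψ σ) / (f (ψ σ)) ^ 2)
        - (P₃ (ψ σ) / (f (ψ σ)) ^ 2) * Q₂ (ψ σ)
      = -(P₁ (ψ σ) + P₃ (ψ σ) * Q₂ (ψ σ)) / (f (ψ σ)) ^ 2) ∧
    (∀ σ, Q₁ (ψ σ) / f (ψ σ) - deriv (fun τ => Q₂ (ψ τ)) σ
      = (Q₁ (ψ σ) - deriv Q₂ (ψ σ)) / f (ψ σ)) := by
  have hψ_deriv : ∀ σ, HasDerivAt ψ (f (ψ σ))⁻¹ σ := fun σ => by
    simpa [hψ' σ] using (hψ.differentiable (by simp) σ).hasDerivAt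
  have ha' : ContDiff ℝ (⊤ : ℕ∞) (deriv a) := (contDiff_infty_iff_deriv.mp ha).2
  have ha'' : Differentiable ℝ (deriv (deriv a)) :=
    (contDiff_infty_iff_deriv.mp ha').2.differentiable (by simp)
  have hE₁_eq : E₁ = fun σ => deriv a (ψ σ) := funext hE₁
  have hE₁' : ∀ σ, deriv E₁ σ = (f (ψ σ))⁻¹ • deriv (deriv a) (ψ σ) := fun σ => by
    rw [hE₁_eq, deriv_comp_of_hasDerivAt_inv (hψ_deriv σ) (ha'.differentiable (by simp) _)]
  refine ⟨fun σ => ?_, fun σ => ?_, fun σ => by ring, fun σ => ?_⟩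
  · have hf₀ := (hfpos (ψ σ)).ne'
    rw [hE₁_eq, deriv_deriv_comp_of_hasDerivAt_inv hψ_deriv (hf.differentiable (by simp) _) hf₀
      (ha'.differentiable (by simp)) (ha'' _), hODE₁, ← hE₁_eq, hE₁' σ, hE₁ σ, hV σ]
    match_scalars <;> field_simp
  · rw [funext hV, deriv_comp_of_hasDerivAt_inv (hψ_deriv σ) (hv.differentiable (by simp) _),
      hODE₂, hE₁ σ, hE₁' σ]
    module
  · rw [deriv_comp_of_hasDerivAt_inv (hψ_deriv σ) (hQ₂.differentiable (by simp) _), smul_eq_mul]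
    ring

/-- Example 2: Behavior of the frame-decomposition coefficients
and of the invariants under the speed change `γ = ∫ f·a'`.  With
`a''' = P₁·a' + P₂·a'' + P₃·v`, `v' = Q₁·a' + Q₂·a''`, `ψ' = 1/(f ∘ ψ)`,
`E₁ = a' ∘ ψ`, `V = v ∘ ψ`:
`E₁'' = (P₁/f²)·E₁ + (P₂/f − f'/f²)·E₁' + (P₃/f²)·V`,
`V' = (Q₁/f)·E₁ + Q₂·E₁'`, and the invariants become
`I₁ = P₃/f²`, `I₂ = P₂/f − f'/f²`, `I₃ = −(P₁ + P₃Q₂)/f²`,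
`I₄ = (Q₁ − Q₂')/f` (each evaluated along `ψ`). -/
theorem stmt_9 (a v : ℝ → (Fin 3 → ℝ)) (P₁ P₂ P₃ Q₁ Q₂ : ℝ → ℝ)
    (ha : ContDiff ℝ (⊤ : ℕ∞) a) (hv : ContDiff ℝ (⊤ : ℕ∞) v)
    (hP₁ : ContDiff ℝ (⊤ : ℕ∞) P₁) (hP₂ : ContDiff ℝ (⊤ : ℕ∞) P₂)
    (hP₃ : ContDiff ℝ (⊤ : ℕ∞) P₃)
    (hQ₁ : ContDiff ℝ (⊤ : ℕ∞) Q₁) (hQ₂ : ContDiff ℝ (⊤ : ℕ∞) Q₂)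
    (hODE₁ : ∀ s, deriv (deriv (deriv a)) s
      = P₁ s • deriv a s + P₂ s • deriv (deriv a) s + P₃ s • v s)
    (hODE₂ : ∀ s, deriv v s = Q₁ s • deriv a s + Q₂ s • deriv (deriv a) s)
    (f : ℝ → ℝ) (hf : ContDiff ℝ (⊤ : ℕ∞) f) (hfpos : ∀ s, 0 < f s)
    (ψ : ℝ → ℝ) (hψ : ContDiff ℝ (⊤ : ℕ∞) ψ)
    (hψ' : ∀ σ, deriv ψ σ = 1 / f (ψ σ))
    (E₁ V : ℝ → (Fin 3 → ℝ))
    (hE₁ : ∀ σ, E₁ σ = deriv a (ψ σ)) (hV : ∀ σ, V σ = v (ψ σ)) :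
    (∀ σ, deriv (deriv E₁) σ
      = (P₁ (ψ σ) / (f (ψ σ)) ^ 2) • E₁ σ
        + (P₂ (ψ σ) / f (ψ σ) - deriv f (ψ σ) / (f (ψ σ)) ^ 2) • deriv E₁ σ
        + (P₃ (ψ σ) / (f (ψ σ)) ^ 2) • V σ) ∧
    (∀ σ, deriv V σ
      = (Q₁ (ψ σ) / f (ψ σ)) • E₁ σ + Q₂ (ψ σ) • deriv E₁ σ) ∧
    (∀ σ, -(P₁ (ψ σ) / (f (ψ σ)) ^ 2)
        - (P₃ (ψ σ) / (f (ψ σ)) ^ 2) * Q₂ (ψ σ)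
      = -(P₁ (ψ σ) + P₃ (ψ σ) * Q₂ (ψ σ)) / (f (ψ σ)) ^ 2) ∧
    (∀ σ, Q₁ (ψ σ) / f (ψ σ) - deriv (fun τ => Q₂ (ψ τ)) σ
      = (Q₁ (ψ σ) - deriv Q₂ (ψ σ)) / f (ψ σ)) :=
  stmt_9_general a v P₁ P₂ P₃ Q₁ Q₂ ha hv hQ₂ hODE₁ hODE₂ f hf hfpos ψ hψ hψ' E₁ V hE₁ hV
end

section
/- (Theorem 5.1: invariance of I₄ under parallel translation of the unit sphere.) Let γ, v : ℝ → ℝ³ be smooth curves, set e₁ = γ', and suppose e₁(s) and e₁'(s) are linearly independent for every s and that v' = q₁·e₁ + q₂·e₁' for smooth functions q₁, q₂ : ℝ → ℝ. Let φ : ℝ → ℝ be a smooth map with φ'(t) > 0 for all t, let a₀ ∈ ℝ³ be a fixed vector, and define the reparametrized data ē₁ = (γ ∘ φ)' and v̄ = (v ∘ φ) + a₀. If q̄₁, q̄₂ : ℝ → ℝ are smooth functions with v̄' = q̄₁·ē₁ + q̄₂·ē₁', then q̄₁(t) − q̄₂'(t) = q₁(φ(t)) − q₂'(φ(t)) for all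 t. In other words, the invariant I₄ = q₁ − q₂' is unchanged under simultaneously reparametrizing the curve and translating v by a fixed vector (as happens under a parallel translation of the unit sphere of the gauge). -/
/-!
Write `c = γ ∘ φ`. By the chain rule `c' = φ' · γ'∘φ`, `c'' = φ'² · γ''∘φ + φ'' · γ'∘φ` and
`v̄' = φ' · v'∘φ`, so comparing coefficients in the frame `(γ'∘φ, γ''∘φ)` gives
`q̄₂ φ' = q₂∘φ` and `q̄₁ φ' + q̄₂ φ'' = φ' · q₁∘φ`. Differentiating the first relation gives
`q̄₂' φ' + q̄₂ φ'' = φ' · q₂'∘φ`; subtracting and dividing by `φ' ≠ 0` leaves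
`q̄₁ - q̄₂' = (q₁ - q₂')∘φ`.
-/

section Reparametrization

variable {E : Type*} [NormedAddCommGroup E] [NormedSpace ℝ E] {f : ℝ → E} {φ : ℝ → ℝ}

lemma deriv_comp_eq_smul (hf : Differentiable ℝ f) (hφ : Differentiable ℝ φ) :
    deriv (fun τ => f (φ τ)) = fun τ => deriv φ τ • deriv f (φ τ) :=
  funext fun τ => deriv.scomp τ (hf (φ τ)) (hφ τ)

lemma deriv_deriv_comp (hf : Differentiable ℝ f) (hf' : Differentiable ℝ (deriv f))
    (hφ : Differentiable ℝ φ) (hφ' : Differentiable ℝ (deriv φ)) (t : ℝ) :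
    deriv (deriv (fun τ => f (φ τ))) t
      = (deriv φ t * deriv φ t) • deriv (deriv f) (φ t) + deriv (deriv φ) t • deriv f (φ t) := by
  have hf'φ : DifferentiableAt ℝ (fun τ => deriv f (φ τ)) t := (hf' (φ t)).comp t (hφ t)
  rw [deriv_comp_eq_smul hf hφ, deriv_fun_smul (hφ' t) hf'φ, deriv_comp_eq_smul hf' hφ,
    smul_smul]

lemma reparam_coeff_relations {γ v : ℝ → E} (hγ : Differentiable ℝ γ)
    (hγ' : Differentiable ℝ (deriv γ)) (hv : Differentiable ℝ v) (hφ : Differentiable ℝ φ)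
    (hφ' : Differentiable ℝ (deriv φ)) (a₀ : E) {q₁ q₂ qb₁ qb₂ : ℝ → ℝ} (t : ℝ)
    (hli : LinearIndependent ℝ ![deriv γ (φ t), deriv (deriv γ) (φ t)])
    (hveq : deriv v (φ t) = q₁ (φ t) • deriv γ (φ t) + q₂ (φ t) • deriv (deriv γ) (φ t))
    (hvbeq : deriv (fun τ => v (φ τ) + a₀) t
      = qb₁ t • deriv (fun τ => γ (φ τ)) t + qb₂ t • deriv (deriv (fun τ => γ (φ τ))) t) :
    qb₁ t * deriv φ t + qb₂ t * deriv (deriv φ) t = deriv φ t * q₁ (φ t) ∧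
      qb₂ t * (deriv φ t * deriv φ t) = deriv φ t * q₂ (φ t) := by
  have hvb : deriv (fun τ => v (φ τ) + a₀) t = deriv φ t • deriv v (φ t) := by
    rw [deriv_add_const]
    exact deriv.scomp t (hv (φ t)) (hφ t)
  rw [hvb, hveq, deriv_deriv_comp hγ hγ' hφ hφ', deriv_comp_eq_smul hγ hφ] at hvbeq
  refine hli.eq_of_pair ?_
  simp only [smul_add, smul_smul, add_smul] at hvbeq ⊢
  rw [hvbeq]
  abel

end Reparametrization

lemma sub_deriv_eq_comp_of_coeff_relations {φ q₁ q₂ qb₁ qb₂ : ℝ → ℝ} (t : ℝ)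
    (hφ : Differentiable ℝ φ) (hφ' : Differentiable ℝ (deriv φ)) (hφ't : deriv φ t ≠ 0)
    (hq₂ : Differentiable ℝ q₂) (hqb₂ : Differentiable ℝ qb₂)
    (h₁ : qb₁ t * deriv φ t + qb₂ t * deriv (deriv φ) t = deriv φ t * q₁ (φ t))
    (h₂ : (fun τ => qb₂ τ * deriv φ τ) = fun τ => q₂ (φ τ)) :
    qb₁ t - deriv qb₂ t = q₁ (φ t) - deriv q₂ (φ t) := by
  have hder : deriv qb₂ t * deriv φ t + qb₂ t * deriv (deriv φ) t
      = deriv φ t * deriv q₂ (φ t) := by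
    rw [← deriv_fun_mul (hqb₂ t) (hφ' t), h₂, ← smul_eq_mul]
    exact deriv.scomp t (hq₂ (φ t)) (hφ t)
  refine mul_right_cancel₀ hφ't ?_
  linear_combination h₁ - hder

theorem stmt_13_general (γ v : ℝ → (Fin 3 → ℝ))
    (hγ : ContDiff ℝ (⊤ : ℕ∞) γ) (hv : ContDiff ℝ (⊤ : ℕ∞) v)
    (hli : ∀ s, LinearIndependent ℝ ![deriv γ s, deriv (deriv γ) s])
    (q₁ q₂ : ℝ → ℝ)
    (hq₂ : ContDiff ℝ (⊤ : ℕ∞) q₂)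
    (hveq : ∀ s, deriv v s = q₁ s • deriv γ s + q₂ s • deriv (deriv γ) s)
    (φ : ℝ → ℝ) (hφ : ContDiff ℝ (⊤ : ℕ∞) φ) (hφ' : ∀ t, 0 < deriv φ t)
    (a₀ : Fin 3 → ℝ)
    (qb₁ qb₂ : ℝ → ℝ)
    (hqb₂ : ContDiff ℝ (⊤ : ℕ∞) qb₂)
    (hvbeq : ∀ t, deriv (fun τ => v (φ τ) + a₀) t
      = qb₁ t • deriv (fun τ => γ (φ τ)) t
        + qb₂ t • deriv (deriv (fun τ => γ (φ τ))) t) :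
    ∀ t, qb₁ t - deriv qb₂ t = q₁ (φ t) - deriv q₂ (φ t) := by
  have hγ' : Differentiable ℝ (deriv γ) :=
    (contDiff_infty_iff_deriv.mp hγ).2.differentiable (by simp)
  have hφ'' : Differentiable ℝ (deriv φ) :=
    (contDiff_infty_iff_deriv.mp hφ).2.differentiable (by simp)
  have hcoeff t := reparam_coeff_relations (hγ.differentiable (by simp)) hγ'
    (hv.differentiable (by simp)) (hφ.differentiable (by simp)) hφ'' a₀ t
    (hli (φ t)) (hveq (φ t)) (hvbeq t)
  have h₂ : (fun τ => qb₂ τ * deriv φ τ) = fun τ => q₂ (φ τ) := funext fun τ =>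
    mul_right_cancel₀ (hφ' τ).ne' (by linear_combination (hcoeff τ).2)
  intro t
  exact sub_deriv_eq_comp_of_coeff_relations t (hφ.differentiable (by simp)) hφ''
    (hφ' t).ne' (hq₂.differentiable (by simp)) (hqb₂.differentiable (by simp)) (hcoeff t).1 h₂

/-- Theorem 5.1: The invariant `I₄ = q₁ − q₂'` is unchanged
when the curve is reparametrized by `φ` (with `φ' > 0`) and `v` is translated
by a fixed vector `a₀` (parallel translation of the unit sphere):
if `v' = q₁·e₁ + q₂·e₁'` with `e₁ = γ'`, and
`v̄' = q̄₁·ē₁ + q̄₂·ē₁'` with `ē₁ = (γ∘φ)'` and `v̄ = v∘φ + a₀`, then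
`q̄₁ − q̄₂' = (q₁ − q₂') ∘ φ`. -/
theorem stmt_13 (γ v : ℝ → (Fin 3 → ℝ))
    (hγ : ContDiff ℝ (⊤ : ℕ∞) γ) (hv : ContDiff ℝ (⊤ : ℕ∞) v)
    (hli : ∀ s, LinearIndependent ℝ ![deriv γ s, deriv (deriv γ) s])
    (q₁ q₂ : ℝ → ℝ)
    (hq₁ : ContDiff ℝ (⊤ : ℕ∞) q₁) (hq₂ : ContDiff ℝ (⊤ : ℕ∞) q₂)
    (hveq : ∀ s, deriv v s = q₁ s • deriv γ s + q₂ s • deriv (deriv γ) s)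
    (φ : ℝ → ℝ) (hφ : ContDiff ℝ (⊤ : ℕ∞) φ) (hφ' : ∀ t, 0 < deriv φ t)
    (a₀ : Fin 3 → ℝ)
    (qb₁ qb₂ : ℝ → ℝ)
    (hqb₁ : ContDiff ℝ (⊤ : ℕ∞) qb₁) (hqb₂ : ContDiff ℝ (⊤ : ℕ∞) qb₂)
    (hvbeq : ∀ t, deriv (fun τ => v (φ τ) + a₀) t
      = qb₁ t • deriv (fun τ => γ (φ τ)) t
        + qb₂ t • deriv (deriv (fun τ => γ (φ τ))) t) :
    ∀ t, qb₁ t - deriv qb₂ t = q₁ (φ t) - deriv q₂ (φ t) :=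
  stmt_13_general γ v hγ hv hli q₁ q₂ hq₂ hveq φ hφ hφ' a₀ qb₁ qb₂ hqb₂ hvbeq
end

section
/- (Translation formulas for the p-coefficients, Section 5.) Let γ, v : ℝ → ℝ³ be smooth curves, set e₁ = γ', and suppose e₁'' = p₁·e₁ + p₂·e₁' + p₃·v for smooth functions p₁, p₂, p₃ : ℝ → ℝ. Let φ : ℝ → ℝ be smooth with φ' > 0, let f : ℝ → ℝ be a smooth positive function with φ'(t) = f(φ(t)) for all t, let a₀ ∈ ℝ³ be fixed, and set ē₁ = (γ ∘ φ)' and v̄ = (v ∘ φ) + a₀. Then for all t: ē₁''(t) = (f·f'' − 2f'² + p₁·f² − p₂·f·f')(φ(t))·ē₁(t) + (3f' + p₂·f)(φ(t))·ē₁'(t) + (p₃·f³)(φ(t))·(v̄(t) − a₀). Consequently, if a₀ = a₀₁·ē₁ + a₀₂·ē₁' + a₀₃·v̄ pointwise, then the new coefficients in ē₁'' = p̄₁·ē₁ + p̄₂·ē₁' + p̄₃·v̄ are p̄₁ = ff'' − 2f'² + p₁f² − p₂ff' − p₃f³·a₀₁, p̄₂ = 3f' + p₂f − p₃f³·a₀₂,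 and p̄₃ = p₃f³(1 − a₀₃) (coefficients of f and pᵢ evaluated at φ(t)). -/
/-!
The chain rule `(h ∘ φ)' = (f ∘ φ) • (h' ∘ φ)`, applied three times, writes `ē₁`, `ē₁'` and `ē₁''` as
combinations of `γ' ∘ φ`, `γ'' ∘ φ`, `γ''' ∘ φ` with coefficients polynomial in `f, f', f''` at
`φ t`. After substituting the equation for `γ'''`, both sides of the first formula are the same
combination of `γ' ∘ φ`, `γ'' ∘ φ` and `v ∘ φ`. The second formula is then linear algebra: expand
`v̄ - a₀` using the decomposition of `a₀`.
-/

section Reparametrization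

variable {E : Type*} [NormedAddCommGroup E] [NormedSpace ℝ E] {φ f : ℝ → ℝ}

theorem hasDerivAt_comp_of_deriv_eq (hφ : Differentiable ℝ φ) (hφf : ∀ t, deriv φ t = f (φ t))
    {h : ℝ → E} (hh : Differentiable ℝ h) (t : ℝ) :
    HasDerivAt (fun τ => h (φ τ)) (f (φ t) • deriv h (φ t)) t := by
  have hφt := (hφ t).hasDerivAt
  rw [hφf t] at hφt
  exact (hh (φ t)).hasDerivAt.scomp t hφt

theorem deriv_comp_of_deriv_eq (hφ : Differentiable ℝ φ) (hφf : ∀ t, deriv φ t = f (φ t))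
    {h : ℝ → E} (hh : Differentiable ℝ h) :
    deriv (fun τ => h (φ τ)) = fun t => f (φ t) • deriv h (φ t) :=
  funext fun t => (hasDerivAt_comp_of_deriv_eq hφ hφf hh t).deriv

theorem deriv_deriv_comp_of_deriv_eq (hφ : Differentiable ℝ φ) (hφf : ∀ t, deriv φ t = f (φ t))
    (hf : Differentiable ℝ f) {γ : ℝ → E} (hγ : ContDiff ℝ 2 γ) :
    deriv (deriv (fun τ => γ (φ τ))) = fun t =>
      (f (φ t) * deriv f (φ t)) • deriv γ (φ t) + f (φ t) ^ 2 • deriv (deriv γ) (φ t) := by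
  rw [deriv_comp_of_deriv_eq hφ hφf (hγ.differentiable two_ne_zero)]
  funext t
  have hfφ := hasDerivAt_comp_of_deriv_eq hφ hφf hf t
  have hγ'φ := hasDerivAt_comp_of_deriv_eq hφ hφf hγ.differentiable_deriv_two t
  refine (hfφ.smul hγ'φ).deriv.trans ?_
  module

theorem deriv_deriv_deriv_comp_of_deriv_eq (hφ : Differentiable ℝ φ)
    (hφf : ∀ t, deriv φ t = f (φ t)) (hf : ContDiff ℝ 2 f) {γ : ℝ → E} (hγ : ContDiff ℝ 3 γ)
    (t : ℝ) :
    deriv (deriv (deriv (fun τ => γ (φ τ)))) t =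
      (f (φ t) * (deriv f (φ t) ^ 2 + f (φ t) * deriv (deriv f) (φ t))) • deriv γ (φ t)
        + (3 * f (φ t) ^ 2 * deriv f (φ t)) • deriv (deriv γ) (φ t)
        + f (φ t) ^ 3 • deriv (deriv (deriv γ)) (φ t) := by
  have hγ' : ContDiff ℝ 2 (deriv γ) := hγ.deriv'
  rw [deriv_deriv_comp_of_deriv_eq hφ hφf (hf.differentiable two_ne_zero) (hγ.of_le (by norm_num))]
  have hfφ := hasDerivAt_comp_of_deriv_eq hφ hφf (hf.differentiable two_ne_zero) t
  have hf'φ := hasDerivAt_comp_of_deriv_eq hφ hφf hf.differentiable_deriv_two t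
  have hγ'φ := hasDerivAt_comp_of_deriv_eq hφ hφf (hγ'.differentiable two_ne_zero) t
  have hγ''φ := hasDerivAt_comp_of_deriv_eq hφ hφf hγ'.differentiable_deriv_two t
  refine (((hfφ.mul hf'φ).smul hγ'φ).add ((hfφ.pow 2).smul hγ''φ)).deriv.trans ?_
  simp only [smul_eq_mul, Pi.mul_apply, Pi.pow_apply]
  module

theorem deriv_deriv_deriv_comp_eq_of_ode (hφ : Differentiable ℝ φ)
    (hφf : ∀ t, deriv φ t = f (φ t)) (hf : ContDiff ℝ 2 f) {γ v : ℝ → E} (hγ : ContDiff ℝ 3 γ)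
    {p₁ p₂ p₃ : ℝ → ℝ} (hode : ∀ s, deriv (deriv (deriv γ)) s
      = p₁ s • deriv γ s + p₂ s • deriv (deriv γ) s + p₃ s • v s) (t : ℝ) :
    deriv (deriv (deriv (fun τ => γ (φ τ)))) t
      = (f (φ t) * deriv (deriv f) (φ t) - 2 * deriv f (φ t) ^ 2 + p₁ (φ t) * f (φ t) ^ 2
          - p₂ (φ t) * f (φ t) * deriv f (φ t)) • deriv (fun τ => γ (φ τ)) t
        + (3 * deriv f (φ t) + p₂ (φ t) * f (φ t)) • deriv (deriv (fun τ => γ (φ τ))) t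
        + (p₃ (φ t) * f (φ t) ^ 3) • v (φ t) := by
  rw [deriv_deriv_deriv_comp_of_deriv_eq hφ hφf hf hγ, hode,
    deriv_deriv_comp_of_deriv_eq hφ hφf (hf.differentiable two_ne_zero) (hγ.of_le (by norm_num)),
    deriv_comp_of_deriv_eq hφ hφf (hγ.differentiable (by norm_num))]
  module

end Reparametrization

theorem smul_add_smul_add_smul_sub_of_eq {R M : Type*} [CommRing R] [AddCommGroup M] [Module R M]
    {e e' w a : M} {A B C a₁ a₂ a₃ : R} (ha : a = a₁ • e + a₂ • e' + a₃ • w) :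
    A • e + B • e' + C • (w - a) = (A - C * a₁) • e + (B - C * a₂) • e' + (C * (1 - a₃)) • w := by
  rw [ha]
  module

theorem stmt_14_general (γ v : ℝ → (Fin 3 → ℝ))
    (hγ : ContDiff ℝ (⊤ : ℕ∞) γ)
    (p₁ p₂ p₃ : ℝ → ℝ)
    (heq : ∀ s, deriv (deriv (deriv γ)) s
      = p₁ s • deriv γ s + p₂ s • deriv (deriv γ) s + p₃ s • v s)
    (φ f : ℝ → ℝ)
    (hφ : ContDiff ℝ (⊤ : ℕ∞) φ) (hf : ContDiff ℝ (⊤ : ℕ∞) f)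
    (hφf : ∀ t, deriv φ t = f (φ t))
    (a₀ : Fin 3 → ℝ) :
    (∀ t, deriv (deriv (deriv (fun τ => γ (φ τ)))) t
      = (f (φ t) * deriv (deriv f) (φ t) - 2 * (deriv f (φ t)) ^ 2
          + p₁ (φ t) * (f (φ t)) ^ 2
          - p₂ (φ t) * f (φ t) * deriv f (φ t)) • deriv (fun τ => γ (φ τ)) t
        + (3 * deriv f (φ t) + p₂ (φ t) * f (φ t))
            • deriv (deriv (fun τ => γ (φ τ))) t
        + (p₃ (φ t) * (f (φ t)) ^ 3) • ((v (φ t) + a₀) - a₀)) ∧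
    (∀ a₀₁ a₀₂ a₀₃ : ℝ → ℝ,
      (∀ t, a₀ = a₀₁ t • deriv (fun τ => γ (φ τ)) t
          + a₀₂ t • deriv (deriv (fun τ => γ (φ τ))) t
          + a₀₃ t • (v (φ t) + a₀)) →
      ∀ t, deriv (deriv (deriv (fun τ => γ (φ τ)))) t
        = (f (φ t) * deriv (deriv f) (φ t) - 2 * (deriv f (φ t)) ^ 2
            + p₁ (φ t) * (f (φ t)) ^ 2
            - p₂ (φ t) * f (φ t) * deriv f (φ t)
            - p₃ (φ t) * (f (φ t)) ^ 3 * a₀₁ t) • deriv (fun τ => γ (φ τ)) t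
          + (3 * deriv f (φ t) + p₂ (φ t) * f (φ t)
              - p₃ (φ t) * (f (φ t)) ^ 3 * a₀₂ t)
              • deriv (deriv (fun τ => γ (φ τ))) t
          + (p₃ (φ t) * (f (φ t)) ^ 3 * (1 - a₀₃ t)) • (v (φ t) + a₀)) := by
  have third_deriv := deriv_deriv_deriv_comp_eq_of_ode (hφ.differentiable (by simp)) hφf
    (hf.of_le (by norm_cast)) (hγ.of_le (by norm_cast)) heq
  refine ⟨fun t => by rw [third_deriv t, add_sub_cancel_right], fun a₀₁ a₀₂ a₀₃ ha₀ t => ?_⟩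
  rw [third_deriv t, ← smul_add_smul_add_smul_sub_of_eq (ha₀ t), add_sub_cancel_right]

/-- Section 5, translation formulas for the `p`-coefficients:
with `e₁ = γ'`, `e₁'' = p₁·e₁ + p₂·e₁' + p₃·v`, a reparametrization
`s = φ(t)` with `φ' = f ∘ φ` (`f > 0`), and `ē₁ = (γ∘φ)'`,
`v̄ = v∘φ + a₀`, one has
`ē₁'' = (ff'' − 2f'² + p₁f² − p₂ff')·ē₁ + (3f' + p₂f)·ē₁' + p₃f³·(v̄ − a₀)`;
and if `a₀ = a₀₁·ē₁ + a₀₂·ē₁' + a₀₃·v̄` pointwise, then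
`ē₁'' = p̄₁·ē₁ + p̄₂·ē₁' + p̄₃·v̄` with
`p̄₁ = ff'' − 2f'² + p₁f² − p₂ff' − p₃f³a₀₁`,
`p̄₂ = 3f' + p₂f − p₃f³a₀₂`, `p̄₃ = p₃f³(1 − a₀₃)`. -/
theorem stmt_14 (γ v : ℝ → (Fin 3 → ℝ))
    (hγ : ContDiff ℝ (⊤ : ℕ∞) γ) (hv : ContDiff ℝ (⊤ : ℕ∞) v)
    (p₁ p₂ p₃ : ℝ → ℝ)
    (hp₁ : ContDiff ℝ (⊤ : ℕ∞) p₁) (hp₂ : ContDiff ℝ (⊤ : ℕ∞) p₂)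
    (hp₃ : ContDiff ℝ (⊤ : ℕ∞) p₃)
    (heq : ∀ s, deriv (deriv (deriv γ)) s
      = p₁ s • deriv γ s + p₂ s • deriv (deriv γ) s + p₃ s • v s)
    (φ f : ℝ → ℝ)
    (hφ : ContDiff ℝ (⊤ : ℕ∞) φ) (hf : ContDiff ℝ (⊤ : ℕ∞) f)
    (hfpos : ∀ s, 0 < f s) (hφf : ∀ t, deriv φ t = f (φ t))
    (a₀ : Fin 3 → ℝ) :
    (∀ t, deriv (deriv (deriv (fun τ => γ (φ τ)))) t
      = (f (φ t) * deriv (deriv f) (φ t) - 2 * (deriv f (φ t)) ^ 2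
          + p₁ (φ t) * (f (φ t)) ^ 2
          - p₂ (φ t) * f (φ t) * deriv f (φ t)) • deriv (fun τ => γ (φ τ)) t
        + (3 * deriv f (φ t) + p₂ (φ t) * f (φ t))
            • deriv (deriv (fun τ => γ (φ τ))) t
        + (p₃ (φ t) * (f (φ t)) ^ 3) • ((v (φ t) + a₀) - a₀)) ∧
    (∀ a₀₁ a₀₂ a₀₃ : ℝ → ℝ,
      (∀ t, a₀ = a₀₁ t • deriv (fun τ => γ (φ τ)) t
          + a₀₂ t • deriv (deriv (fun τ => γ (φ τ))) t
          + a₀₃ t • (v (φ t) + a₀)) →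
      ∀ t, deriv (deriv (deriv (fun τ => γ (φ τ)))) t
        = (f (φ t) * deriv (deriv f) (φ t) - 2 * (deriv f (φ t)) ^ 2
            + p₁ (φ t) * (f (φ t)) ^ 2
            - p₂ (φ t) * f (φ t) * deriv f (φ t)
            - p₃ (φ t) * (f (φ t)) ^ 3 * a₀₁ t) • deriv (fun τ => γ (φ τ)) t
          + (3 * deriv f (φ t) + p₂ (φ t) * f (φ t)
              - p₃ (φ t) * (f (φ t)) ^ 3 * a₀₂ t)
              • deriv (deriv (fun τ => γ (φ τ))) t
          + (p₃ (φ t) * (f (φ t)) ^ 3 * (1 - a₀₃ t)) • (v (φ t) + a₀)) :=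
  stmt_14_general γ v hγ p₁ p₂ p₃ heq φ f hφ hf hφf a₀
end

section
/- (Birkhoff-orthogonal vector in the Randers space.) Fix 0 < b < 1 and define G : ℝ³ → ℝ by G(x₁, x₂, x₃) = (1 − b²)(x₁² + x₂²) + ((1 − b²)x₃ + b)². Let y = (y₁, y₂, y₃) ∈ ℝ³ be nonzero, set D = √((1 − b²)(y₁² + y₂²) + y₃²), and define v = (y₁/D, y₂/D, (1/(1 − b²))(y₃/D − b)). Then G(v) = 1 and there exists λ > 0 such that the gradient of G at v equals λ·y. -/
/-!
With `w = (v₁, v₂, (1 - b²) v₃ + b)` we have `G(v) = (1 - b²)(w₁² + w₂²) + w₃²` and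
`∇G(v) = 2 (1 - b²) w`. The vector `v` is chosen so that `w = y / D`, hence `G(v) = 1` by the
choice of `D`, and `∇G(v) = (2 (1 - b²) / D) • y`.
-/

theorem EuclideanSpace.hasGradientAt_sum_apply {ι : Type*} [Fintype ι] {φ : ι → ℝ → ℝ}
    {φ' : ι → ℝ} {v : EuclideanSpace ℝ ι} (h : ∀ i, HasDerivAt (φ i) (φ' i) (v i)) :
    HasGradientAt (fun x : EuclideanSpace ℝ ι => ∑ i, φ i (x i)) (WithLp.toLp 2 φ') v := by
  rw [hasGradientAt_iff_hasFDerivAt]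
  refine (HasFDerivAt.fun_sum fun i _ =>
    (h i).hasFDerivAt.comp v (EuclideanSpace.proj (𝕜 := ℝ) i).hasFDerivAt).congr_fderiv ?_
  ext w
  simp [PiLp.inner_apply, mul_comm]

theorem hasGradientAt_randersQuadric (c b : ℝ) (v : EuclideanSpace ℝ (Fin 3)) :
    HasGradientAt
      (fun x : EuclideanSpace ℝ (Fin 3) => c * (x 0 ^ 2 + x 1 ^ 2) + (c * x 2 + b) ^ 2)
      (WithLp.toLp 2 ![2 * c * v 0, 2 * c * v 1, 2 * c * (c * v 2 + b)]) v := by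
  have hsq (t : ℝ) : HasDerivAt (fun s => c * s ^ 2) (2 * c * t) t := by
    simpa [mul_comm, mul_left_comm] using (hasDerivAt_pow 2 t).const_mul c
  have hshift (t : ℝ) : HasDerivAt (fun s => (c * s + b) ^ 2) (2 * c * (c * t + b)) t := by
    simpa [mul_comm, mul_left_comm] using
      (((hasDerivAt_id t).const_mul c).add_const b).fun_pow 2
  have hsum := EuclideanSpace.hasGradientAt_sum_apply
    (φ := ![fun t => c * t ^ 2, fun t => c * t ^ 2, fun t => (c * t + b) ^ 2])
    (φ' := ![2 * c * v 0, 2 * c * v 1, 2 * c * (c * v 2 + b)]) <| by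
      intro i
      fin_cases i
      exacts [hsq _, hsq _, hshift _]
  convert hsum using 2 with x
  simp [Fin.sum_univ_three, mul_add]

theorem weighted_sq_sum_pos {c : ℝ} (hc : 0 < c) {y : EuclideanSpace ℝ (Fin 3)} (hy : y ≠ 0) :
    0 < c * (y 0 ^ 2 + y 1 ^ 2) + y 2 ^ 2 := by
  contrapose! hy
  have h0 := mul_nonneg hc.le (sq_nonneg (y 0))
  have h1 := mul_nonneg hc.le (sq_nonneg (y 1))
  have h2 := sq_nonneg (y 2)
  have hy0 : y 0 = 0 := pow_eq_zero_iff two_ne_zero |>.mp (by nlinarith)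
  have hy1 : y 1 = 0 := pow_eq_zero_iff two_ne_zero |>.mp (by nlinarith)
  have hy2 : y 2 = 0 := pow_eq_zero_iff two_ne_zero |>.mp (by nlinarith)
  ext i
  fin_cases i <;> assumption

/-- Birkhoff-orthogonal vector in the Randers space: for
`G(x) = (1−b²)(x₁²+x₂²) + ((1−b²)x₃+b)²`, nonzero `y`, and
`D = √((1−b²)(y₁²+y₂²)+y₃²)`, the vector
`v = (y₁/D, y₂/D, (1/(1−b²))(y₃/D − b))` satisfies `G(v) = 1` and
`grad G |_v = λ·y` for some `λ > 0`. -/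
theorem stmt_15 (b : ℝ) (hb0 : 0 < b) (hb1 : b < 1)
    (G : EuclideanSpace ℝ (Fin 3) → ℝ)
    (hG : ∀ x, G x = (1 - b ^ 2) * ((x 0) ^ 2 + (x 1) ^ 2)
      + ((1 - b ^ 2) * x 2 + b) ^ 2)
    (y : EuclideanSpace ℝ (Fin 3)) (hy : y ≠ 0)
    (D : ℝ)
    (hD : D = Real.sqrt ((1 - b ^ 2) * ((y 0) ^ 2 + (y 1) ^ 2) + (y 2) ^ 2))
    (v : EuclideanSpace ℝ (Fin 3))
    (hv0 : v 0 = y 0 / D) (hv1 : v 1 = y 1 / D)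
    (hv2 : v 2 = (1 / (1 - b ^ 2)) * (y 2 / D - b)) :
    G v = 1 ∧ ∃ lam : ℝ, 0 < lam ∧ gradient G v = lam • y := by
  have hc : 0 < 1 - b ^ 2 := by nlinarith
  have hpos := weighted_sq_sum_pos hc hy
  have hDpos : 0 < D := hD ▸ Real.sqrt_pos.mpr hpos
  have hD2 : D ^ 2 = (1 - b ^ 2) * (y 0 ^ 2 + y 1 ^ 2) + y 2 ^ 2 := hD ▸ Real.sq_sqrt hpos.le
  have hw2 : (1 - b ^ 2) * v 2 + b = y 2 / D := by
    rw [hv2]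
    field_simp
    ring
  refine ⟨?_, 2 * (1 - b ^ 2) / D, by positivity, ?_⟩
  · rw [hG, hv0, hv1, hw2]
    field_simp
    linarith
  · rw [funext hG, (hasGradientAt_randersQuadric _ b v).gradient]
    ext i
    fin_cases i <;> simp [hv0, hv1, hw2] <;> ring
end

section
/- (Example 1.) Fix 0 < b < 1 and let F(x₁, x₂, x₃) = √(x₁² + x₂² + x₃²) + b·x₃. Define γ : ℝ → ℝ³ by γ(t) = (1/(√2 + b))·(cos t, sin t, t), set e₁ = γ', and define v : ℝ → ℝ³ by v(t) = (sin t/√(2 − b²), −cos t/√(2 − b²), (1/(1 − b²))(1/√(2 − b²) − b)). Then: (a) F(γ'(t)) = 1 for all t (so t is the arc-length parameter); (b) v'(t) = −((√2 + b)/√(2 − b²))·e₁'(t) for all t; (c) e₁''(t) = −((√(2 − b²) − b)/(2√(2 − b²)))·e₁(t) + ((√(2 − b²) + b)/(2(√2 + b)))·v(t) for all t. Consequently, the invariants of γ are the constants I₁ = (√(2 − b²) + b)/(2(√2 + b)), I₂ = 0, I₃ = 1, and I₄ = 0. -/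
/-!
Everything is explicit: `γ'`, `γ''`, `γ'''` and `v'` are computed componentwise, and the claimed
identities are then algebraic identities in `sin t`, `cos t`, `b` and `s = √(2 - b²)`. The only
relation needed besides `sin² + cos² = 1` is `s² = 2 - b²`, which is what makes the third
component of `v` balance the third component of `e₁''`.
-/

open Matrix Real

section VecDeriv

variable {𝕜 F : Type*} [NontriviallyNormedField 𝕜] [NormedAddCommGroup F] [NormedSpace 𝕜 F]

theorem HasDerivAt.matrixVecCons {n : ℕ} {f : 𝕜 → F} {g : 𝕜 → Fin n → F} {f' : F}
    {g' : Fin n → F} {x : 𝕜} (hf : HasDerivAt f f' x) (hg : HasDerivAt g g' x) :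
    HasDerivAt (fun t => vecCons (f t) (g t)) (vecCons f' g') x := by
  refine hasDerivAt_pi.2 (Fin.cases ?_ fun i => ?_)
  · simpa using hf
  · simpa using hasDerivAt_pi.1 hg i

theorem hasDerivAt_vecEmpty (x : 𝕜) : HasDerivAt (fun _ => (![] : Fin 0 → F)) ![] x := by
  simpa using hasDerivAt_const x (![] : Fin 0 → F)

theorem hasDerivAt_vec3 {f g h : 𝕜 → F} {f' g' h' : F} {x : 𝕜}
    (hf : HasDerivAt f f' x) (hg : HasDerivAt g g' x) (hh : HasDerivAt h h' x) :
    HasDerivAt (fun t => ![f t, g t, h t]) ![f', g', h'] x :=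
  hf.matrixVecCons (hg.matrixVecCons (hh.matrixVecCons (hasDerivAt_vecEmpty x)))

theorem deriv_const_smul_vec3 (c : 𝕜) {f g h f' g' h' : 𝕜 → F}
    (hf : ∀ x, HasDerivAt f (f' x) x) (hg : ∀ x, HasDerivAt g (g' x) x)
    (hh : ∀ x, HasDerivAt h (h' x) x) :
    deriv (fun t => c • ![f t, g t, h t]) = fun t => c • ![f' t, g' t, h' t] :=
  funext fun x => ((hasDerivAt_vec3 (hf x) (hg x) (hh x)).const_smul c).deriv

end VecDeriv

section Helix

variable (a : ℝ)

theorem deriv_smul_helix :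
    deriv (fun t => a • ![cos t, sin t, t]) = fun t => a • ![-sin t, cos t, 1] :=
  deriv_const_smul_vec3 a hasDerivAt_cos hasDerivAt_sin hasDerivAt_id

theorem deriv_smul_helix_tangent :
    deriv (fun t => a • ![-sin t, cos t, 1]) = fun t => a • ![-cos t, -sin t, 0] :=
  deriv_const_smul_vec3 a (fun t => (hasDerivAt_sin t).neg) hasDerivAt_cos
    (fun t => hasDerivAt_const t 1)

theorem deriv_smul_helix_normal :
    deriv (fun t => a • ![-cos t, -sin t, 0]) = fun t => a • ![sin t, -cos t, 0] := by
  refine deriv_const_smul_vec3 a (fun t => ?_) (fun t => (hasDerivAt_sin t).neg)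
    (fun t => hasDerivAt_const t 0)
  simpa using (hasDerivAt_cos t).fun_neg

theorem deriv_vec_sin_div_neg_cos_div_const (k : ℝ) :
    deriv (fun t => ![sin t / a, -cos t / a, k]) = fun t => ![cos t / a, sin t / a, 0] :=
  funext fun t => (hasDerivAt_vec3 ((hasDerivAt_sin t).div_const a)
    (by simpa [neg_div] using (hasDerivAt_cos t).neg.div_const a)
    (hasDerivAt_const t k)).deriv

end Helix

noncomputable def randersNorm (b : ℝ) (x : Fin 3 → ℝ) : ℝ :=
  √(x 0 ^ 2 + x 1 ^ 2 + x 2 ^ 2) + b * x 2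

theorem randersNorm_helix_tangent {b : ℝ} (hb : 0 < √2 + b) (t : ℝ) :
    randersNorm b ((√2 + b)⁻¹ • ![-sin t, cos t, 1]) = 1 := by
  simp only [randersNorm, Pi.smul_apply, smul_eq_mul, cons_val_zero, cons_val_one,
    cons_val_two, tail_cons, head_cons]
  have hnorm : ((√2 + b)⁻¹ * -sin t) ^ 2 + ((√2 + b)⁻¹ * cos t) ^ 2 + ((√2 + b)⁻¹ * 1) ^ 2
      = ((√2 + b)⁻¹ * √2) ^ 2 := by
    rw [mul_pow _ √2, sq_sqrt zero_le_two]
    linear_combination (√2 + b)⁻¹ ^ 2 * sin_sq_add_cos_sq t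
  rw [hnorm, sqrt_sq (by positivity)]
  field_simp

theorem smul_helix_binormal_eq {b s c : ℝ} (hs : s ^ 2 = 2 - b ^ 2) (hs0 : s ≠ 0)
    (hc : c ≠ 0) (hb : 1 - b ^ 2 ≠ 0) (t : ℝ) :
    c⁻¹ • ![sin t, -cos t, 0]
      = (-((s - b) / (2 * s))) • (c⁻¹ • ![-sin t, cos t, 1])
        + ((s + b) / (2 * c)) • ![sin t / s, -cos t / s, 1 / (1 - b ^ 2) * (1 / s - b)] := by
  simp only [smul_cons, smul_eq_mul, smul_empty, cons_add_cons, empty_add_empty,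
    vecCons_inj, and_true]
  refine ⟨?_, ?_, ?_⟩
  · field_simp
    ring
  · field_simp
    ring
  · field_simp
    linear_combination b * hs

/-- Example 1: in the Randers space with
`F(x) = √(x₁²+x₂²+x₃²) + b·x₃`, the curve
`γ(t) = (1/(√2+b))·(cos t, sin t, t)` is unit speed (`F(γ') = 1`), and with
`v(t) = (sin t/√(2−b²), −cos t/√(2−b²), (1/(1−b²))(1/√(2−b²) − b))` one has
`v' = −((√2+b)/√(2−b²))·e₁'` and
`e₁'' = −((√(2−b²)−b)/(2√(2−b²)))·e₁ + ((√(2−b²)+b)/(2(√2+b)))·v`.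
Consequently the invariants are the constants
`I₁ = (√(2−b²)+b)/(2(√2+b))`, `I₂ = 0`, `I₃ = −p₁ − p₃q₂ = 1`,
`I₄ = q₁ − q₂' = 0`. -/
theorem stmt_16 (b : ℝ) (hb0 : 0 < b) (hb1 : b < 1)
    (F : (Fin 3 → ℝ) → ℝ)
    (hF : ∀ x, F x = Real.sqrt ((x 0) ^ 2 + (x 1) ^ 2 + (x 2) ^ 2) + b * x 2)
    (γ v : ℝ → (Fin 3 → ℝ))
    (hγ : ∀ t, γ t = (Real.sqrt 2 + b)⁻¹ • ![Real.cos t, Real.sin t, t])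
    (hv : ∀ t, v t = ![Real.sin t / Real.sqrt (2 - b ^ 2),
      -Real.cos t / Real.sqrt (2 - b ^ 2),
      (1 / (1 - b ^ 2)) * (1 / Real.sqrt (2 - b ^ 2) - b)]) :
    (∀ t, F (deriv γ t) = 1) ∧
    (∀ t, deriv v t
      = (-((Real.sqrt 2 + b) / Real.sqrt (2 - b ^ 2))) • deriv (deriv γ) t) ∧
    (∀ t, deriv (deriv (deriv γ)) t
      = (-((Real.sqrt (2 - b ^ 2) - b) / (2 * Real.sqrt (2 - b ^ 2)))) • deriv γ t
        + ((Real.sqrt (2 - b ^ 2) + b) / (2 * (Real.sqrt 2 + b))) • v t) ∧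
    (-(-((Real.sqrt (2 - b ^ 2) - b) / (2 * Real.sqrt (2 - b ^ 2))))
      - ((Real.sqrt (2 - b ^ 2) + b) / (2 * (Real.sqrt 2 + b)))
        * (-((Real.sqrt 2 + b) / Real.sqrt (2 - b ^ 2))) = 1) ∧
    (∀ t : ℝ, (0 : ℝ)
      - deriv (fun _ : ℝ => -((Real.sqrt 2 + b) / Real.sqrt (2 - b ^ 2))) t
      = 0) := by
  have hb : 0 < 1 - b ^ 2 := by nlinarith
  have hc : 0 < √2 + b := by positivity
  set s := √(2 - b ^ 2)
  have hs : s ^ 2 = 2 - b ^ 2 := sq_sqrt (by linarith)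
  have hs0 : 0 < s := sqrt_pos.2 (by linarith)
  have e₁ : deriv γ = fun t => (√2 + b)⁻¹ • ![-sin t, cos t, 1] := by
    rw [funext hγ, deriv_smul_helix]
  have e₁' : deriv (deriv γ) = fun t => (√2 + b)⁻¹ • ![-cos t, -sin t, 0] := by
    rw [e₁, deriv_smul_helix_tangent]
  have e₁'' : deriv (deriv (deriv γ)) = fun t => (√2 + b)⁻¹ • ![sin t, -cos t, 0] := by
    rw [e₁', deriv_smul_helix_normal]
  have v' : deriv v = fun t => ![cos t / s, sin t / s, 0] := by
    rw [funext hv, deriv_vec_sin_div_neg_cos_div_const]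
  refine ⟨fun t => ?_, fun t => ?_, fun t => ?_, ?_, fun t => by simp⟩
  · rw [show F = randersNorm b from funext hF, e₁]
    exact randersNorm_helix_tangent hc t
  · rw [v', e₁']
    simp only [smul_cons, smul_eq_mul, smul_empty, vecCons_inj, and_true]
    exact ⟨by field_simp, by field_simp, by simp⟩
  · rw [e₁'', e₁, hv]
    exact smul_helix_binormal_eq hs hs0.ne' hc.ne' hb.ne' t
  · field_simp
    ring
end

section
/- (Example 4.) Fix 0 < b < 1 and define g : ℝ → ℝ by g(t) = √(1 − b² sin²t) − b·cos t, and γ : ℝ → ℝ³ by γ(t) = (1/(1 − b²))·(0, √(1 − b²)·cos t, sin t). Then: (a) g(t) = (1 − b²)/(√(1 − b² sin²t) + b·cos t) > 0 for all t; (b) with F(x₁, x₂, x₃) = √(x₁² + x₂² + x₃²) + b·x₃, one has F(γ'(t)) = 1/g(t) for all t; (c) if ψ : ℝ → ℝ is smooth with ψ'(σ) = g(ψ(σ)) for all σ (the inverse of the arc-length reparametrization) and E₁(σ) = g(ψ(σ))·γ'(ψ(σ)), then E₁''(σ) = (g·g'' − g² − 2g'²)(ψ(σ))·E₁(σ) +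 3g'(ψ(σ))·E₁'(σ) for all σ, so the invariant I₂ of γ with respect to F equals 3g'(ψ(σ)), which is not identically zero. -/
/-!
The velocity `c = γ'` of the ellipse `γ(t) = cos t • A + sin t • B` satisfies `c'' = -c`.
For `E₁ = (g • c) ∘ ψ` with `ψ' = g ∘ ψ`, every `σ`-derivative is `g` times a `t`-derivative,
so `E₁'' = g (g (g c)')'` along `ψ`; expanding with `c'' = -c` and comparing with `E₁` and
`E₁' = g (g c)'` gives the coefficients `g g'' - g² - 2g'²` and `3g'`.
The coefficient `3g'` is not identically zero along `ψ`: `g'(π/2) = b`, and `ψ` takes the value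
`π/2` because `ψ' = g ∘ ψ ≥ 1 - b > 0` makes `ψ` surjective.
-/

open Real Filter

section Curves

variable {E : Type*} [NormedAddCommGroup E] [NormedSpace ℝ E]

theorem deriv_deriv_smul_comp_of_hasDerivAt_neg {ψ g g' g'' : ℝ → ℝ} {c c' : ℝ → E}
    (hψ : ∀ σ, HasDerivAt ψ (g (ψ σ)) σ)
    (hg : ∀ t, HasDerivAt g (g' t) t) (hg' : ∀ t, HasDerivAt g' (g'' t) t)
    (hc : ∀ t, HasDerivAt c (c' t) t) (hc' : ∀ t, HasDerivAt c' (-c t) t) (σ : ℝ) :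
    deriv (deriv fun σ => g (ψ σ) • c (ψ σ)) σ
      = (g (ψ σ) * g'' (ψ σ) - g (ψ σ) ^ 2 - 2 * g' (ψ σ) ^ 2) • (g (ψ σ) • c (ψ σ))
        + (3 * g' (ψ σ)) • deriv (fun σ => g (ψ σ) • c (ψ σ)) σ := by
  have hE : ∀ σ, HasDerivAt (fun σ => g (ψ σ) • c (ψ σ))
      (g (ψ σ) • (g (ψ σ) • c' (ψ σ) + g' (ψ σ) • c (ψ σ))) σ :=
    fun σ => ((hg _).smul (hc _)).scomp σ (hψ σ)
  have hE' : HasDerivAt (fun σ => g (ψ σ) • (g (ψ σ) • c' (ψ σ) + g' (ψ σ) • c (ψ σ)))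
      (g (ψ σ) • (g (ψ σ) • ((g (ψ σ) • -c (ψ σ) + g' (ψ σ) • c' (ψ σ))
          + (g' (ψ σ) • c' (ψ σ) + g'' (ψ σ) • c (ψ σ)))
        + g' (ψ σ) • (g (ψ σ) • c' (ψ σ) + g' (ψ σ) • c (ψ σ)))) σ :=
    ((hg _).smul (((hg _).smul (hc' _)).add ((hg' _).smul (hc _)))).scomp σ (hψ σ)
  rw [funext fun σ => (hE σ).deriv, hE'.deriv]
  module

noncomputable def ellipse (A B : E) (t : ℝ) : E := cos t • A + sin t • B

theorem hasDerivAt_ellipse (A B : E) (t : ℝ) :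
    HasDerivAt (ellipse A B) (ellipse B (-A) t) t :=
  ((hasDerivAt_cos t).smul_const A).add ((hasDerivAt_sin t).smul_const B)
    |>.congr_deriv (by simp only [ellipse, neg_smul, smul_neg]; abel)

theorem deriv_ellipse (A B : E) : deriv (ellipse A B) = ellipse B (-A) :=
  funext fun t => (hasDerivAt_ellipse A B t).deriv

theorem hasDerivAt_ellipse_neg_neg (A B : E) (t : ℝ) :
    HasDerivAt (ellipse (-A) (-B)) (-ellipse B (-A) t) t :=
  (hasDerivAt_ellipse (-A) (-B) t).congr_deriv (by simp only [ellipse, neg_neg, smul_neg]; abel)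

end Curves

theorem surjective_of_pos_le_deriv {f : ℝ → ℝ} {C : ℝ} (hf : Differentiable ℝ f) (hC : 0 < C)
    (h : ∀ x, C ≤ deriv f x) : Function.Surjective f := by
  have hgrow := mul_sub_le_image_sub_of_le_deriv hf h
  refine hf.continuous.surjective ?_ ?_
  · refine tendsto_atTop_mono' _ ?_
      (tendsto_atTop_add_const_left _ (f 0) (tendsto_id.const_mul_atTop hC))
    filter_upwards [eventually_ge_atTop 0] with x hx
    linarith [hgrow hx, show C * id x = C * (x - 0) by simp]
  · refine tendsto_atBot_mono' _ ?_
      (tendsto_atBot_add_const_left _ (f 0) (tendsto_id.const_mul_atBot hC))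
    filter_upwards [eventually_le_atBot 0] with x hx
    linarith [hgrow hx, show C * id x = -(C * (0 - x)) by simp]

section RandersEllipse

variable {b : ℝ}

theorem one_sub_sq_mul_sin_sq_pos (hb : |b| < 1) (t : ℝ) : 0 < 1 - b ^ 2 * sin t ^ 2 := by
  nlinarith [sin_sq_le_one t, (sq_lt_one_iff_abs_lt_one b).2 hb, sq_nonneg b]

theorem abs_mul_cos_lt_sqrt (hb : |b| < 1) (t : ℝ) : |b * cos t| < √(1 - b ^ 2 * sin t ^ 2) := by
  refine abs_lt_of_sq_lt_sq ?_ (sqrt_nonneg _)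
  rw [sq_sqrt (one_sub_sq_mul_sin_sq_pos hb t).le]
  nlinarith [sin_sq_add_cos_sq t, (sq_lt_one_iff_abs_lt_one b).2 hb]

theorem sqrt_sub_mul_cos_pos (hb : |b| < 1) (t : ℝ) : 0 < √(1 - b ^ 2 * sin t ^ 2) - b * cos t :=
  sub_pos.2 (abs_lt.1 (abs_mul_cos_lt_sqrt hb t)).2

theorem sqrt_add_mul_cos_pos (hb : |b| < 1) (t : ℝ) : 0 < √(1 - b ^ 2 * sin t ^ 2) + b * cos t := by
  linarith [(abs_lt.1 (abs_mul_cos_lt_sqrt hb t)).1]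

theorem sqrt_sub_mul_cos_eq_div (hb : |b| < 1) (t : ℝ) :
    √(1 - b ^ 2 * sin t ^ 2) - b * cos t
      = (1 - b ^ 2) / (√(1 - b ^ 2 * sin t ^ 2) + b * cos t) := by
  rw [eq_div_iff (sqrt_add_mul_cos_pos hb t).ne']
  linear_combination sq_sqrt (one_sub_sq_mul_sin_sq_pos hb t).le - b ^ 2 * sin_sq_add_cos_sq t

theorem one_sub_abs_le_sqrt_sub_mul_cos (hb : |b| < 1) (t : ℝ) :
    1 - |b| ≤ √(1 - b ^ 2 * sin t ^ 2) - b * cos t := by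
  have hS : √(1 - b ^ 2 * sin t ^ 2) ≤ 1 :=
    sqrt_le_one.2 (by nlinarith [sq_nonneg b, sq_nonneg (sin t)])
  have hbc : b * cos t ≤ |b| := (le_abs_self _).trans <| by
    rw [abs_mul]; exact mul_le_of_le_one_right (abs_nonneg b) (abs_cos_le_one t)
  rw [sqrt_sub_mul_cos_eq_div hb, le_div_iff₀ (sqrt_add_mul_cos_pos hb t)]
  nlinarith [sq_abs b]

theorem contDiff_sqrt_sub_mul_cos (hb : |b| < 1) :
    ContDiff ℝ (⊤ : ℕ∞) fun t => √(1 - b ^ 2 * sin t ^ 2) - b * cos t :=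
  ((contDiff_const.sub (contDiff_const.mul (contDiff_sin.pow 2))).sqrt
    fun t => (one_sub_sq_mul_sin_sq_pos hb t).ne').sub (contDiff_const.mul contDiff_cos)

theorem hasDerivAt_sqrt_sub_mul_cos_pi_div_two (hb : |b| < 1) :
    HasDerivAt (fun t => √(1 - b ^ 2 * sin t ^ 2) - b * cos t) b (π / 2) := by
  have hS := ((((hasDerivAt_sin (π / 2)).pow 2).const_mul (b ^ 2)).const_sub 1).sqrt
    (one_sub_sq_mul_sin_sq_pos hb (π / 2)).ne'
  exact (hS.sub ((hasDerivAt_cos (π / 2)).const_mul b)).congr_deriv (by simp)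

theorem randers_norm_ellipse_velocity (hb : |b| < 1) (t : ℝ) :
    √((sin t * ((1 - b ^ 2)⁻¹ * √(1 - b ^ 2))) ^ 2 + (cos t * (1 - b ^ 2)⁻¹) ^ 2)
      + b * (cos t * (1 - b ^ 2)⁻¹) = (√(1 - b ^ 2 * sin t ^ 2) - b * cos t)⁻¹ := by
  have hb2 : 0 < 1 - b ^ 2 := by nlinarith [(sq_lt_one_iff_abs_lt_one b).2 hb]
  have hsum : (sin t * ((1 - b ^ 2)⁻¹ * √(1 - b ^ 2))) ^ 2 + (cos t * (1 - b ^ 2)⁻¹) ^ 2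
      = ((1 - b ^ 2)⁻¹ * √(1 - b ^ 2 * sin t ^ 2)) ^ 2 := by
    simp only [mul_pow, sq_sqrt hb2.le, sq_sqrt (one_sub_sq_mul_sin_sq_pos hb t).le]
    linear_combination ((1 - b ^ 2)⁻¹) ^ 2 * sin_sq_add_cos_sq t
  rw [hsum, sqrt_sq (by positivity), sqrt_sub_mul_cos_eq_div hb, inv_div]
  ring

end RandersEllipse

/-- Example 4: with `g(t) = √(1−b²sin²t) − b·cos t` and
`γ(t) = (1/(1−b²))·(0, √(1−b²)·cos t, sin t)`:
(a) `g(t) = (1−b²)/(√(1−b²sin²t) + b·cos t) > 0`;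
(b) `F(γ'(t)) = 1/g(t)` for the Randers norm `F`;
(c) if `ψ' = g ∘ ψ` and `E₁(σ) = g(ψ(σ))·γ'(ψ(σ))`, then
`E₁'' = (gg'' − g² − 2g'²)(ψ)·E₁ + 3g'(ψ)·E₁'`, so the invariant
`I₂ = 3g'(ψ(σ))`, which is not identically zero. -/
theorem stmt_17 (b : ℝ) (hb0 : 0 < b) (hb1 : b < 1)
    (F : (Fin 3 → ℝ) → ℝ)
    (hF : ∀ x, F x = Real.sqrt ((x 0) ^ 2 + (x 1) ^ 2 + (x 2) ^ 2) + b * x 2)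
    (g : ℝ → ℝ)
    (hg : ∀ t, g t = Real.sqrt (1 - b ^ 2 * Real.sin t ^ 2) - b * Real.cos t)
    (γ : ℝ → (Fin 3 → ℝ))
    (hγ : ∀ t, γ t = (1 - b ^ 2)⁻¹
      • ![0, Real.sqrt (1 - b ^ 2) * Real.cos t, Real.sin t]) :
    (∀ t, g t = (1 - b ^ 2) / (Real.sqrt (1 - b ^ 2 * Real.sin t ^ 2)
      + b * Real.cos t) ∧ 0 < g t) ∧
    (∀ t, F (deriv γ t) = 1 / g t) ∧
    (∀ ψ : ℝ → ℝ, ContDiff ℝ (⊤ : ℕ∞) ψ → (∀ σ, deriv ψ σ = g (ψ σ)) →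
      ∀ E₁ : ℝ → (Fin 3 → ℝ), (∀ σ, E₁ σ = g (ψ σ) • deriv γ (ψ σ)) →
      (∀ σ, deriv (deriv E₁) σ
        = (g (ψ σ) * deriv (deriv g) (ψ σ) - (g (ψ σ)) ^ 2
            - 2 * (deriv g (ψ σ)) ^ 2) • E₁ σ
          + (3 * deriv g (ψ σ)) • deriv E₁ σ) ∧
      (∃ σ, 3 * deriv g (ψ σ) ≠ 0)) := by
  have hb : |b| < 1 := abs_lt.2 ⟨by linarith, hb1⟩
  obtain rfl : g = fun t => √(1 - b ^ 2 * sin t ^ 2) - b * cos t := funext hg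
  set A : Fin 3 → ℝ := (1 - b ^ 2)⁻¹ • ![0, √(1 - b ^ 2), 0]
  set B : Fin 3 → ℝ := (1 - b ^ 2)⁻¹ • ![0, 0, 1]
  obtain rfl : γ = ellipse A B := by
    funext t
    ext i
    fin_cases i <;> simp [hγ, ellipse, A, B] <;> ring
  have hγ' := deriv_ellipse A B
  refine ⟨fun t => ⟨sqrt_sub_mul_cos_eq_div hb t, sqrt_sub_mul_cos_pos hb t⟩, fun t => ?_, ?_⟩
  · rw [hF, hγ']
    simpa [ellipse, A, B] using randers_norm_ellipse_velocity hb t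
  intro ψ hψ hψ' E₁ hE₁
  obtain rfl : E₁ = fun σ => _ • ellipse B (-A) (ψ σ) := funext fun σ => by rw [hE₁, hγ']
  obtain ⟨hgd, hg'C⟩ := contDiff_infty_iff_deriv.1 (contDiff_sqrt_sub_mul_cos hb)
  have hg'd := (contDiff_infty_iff_deriv.1 hg'C).1
  have hψd : Differentiable ℝ ψ := hψ.differentiable (by simp)
  refine ⟨deriv_deriv_smul_comp_of_hasDerivAt_neg
    (fun σ => (hψd σ).hasDerivAt.congr_deriv (hψ' σ))
    (fun t => (hgd t).hasDerivAt) (fun t => (hg'd t).hasDerivAt)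
    (hasDerivAt_ellipse B (-A)) (hasDerivAt_ellipse_neg_neg A B), ?_⟩
  obtain ⟨σ, hσ⟩ := surjective_of_pos_le_deriv hψd (sub_pos.2 hb)
    (fun σ => hψ' σ ▸ one_sub_abs_le_sqrt_sub_mul_cos hb (ψ σ)) (π / 2)
  exact ⟨σ, by rw [hσ, (hasDerivAt_sqrt_sub_mul_cos_pi_div_two hb).deriv]; positivity⟩
end
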